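/- Let k be a positive integer and p₀, p₁, p₂ ∈ P_k. The following assertions are equivalent: (1) p₁∘p₂ ≤ p₀ and p₂ ∈ K_{p₁∘p₂}(p₁); (2) p₁ ≤ p₀ and p₂ ≤ ᵗp₁∘p₀; (3) p₁ ≤ p₀∘ᵗp₂ and p₂ ≤ p₀; (4) p₁⊗p₂ ≤ (p₀⊗id_k)∘τ in P_{2k}, where τ is the permutation partition of (1,k+1)(2,k+2)⋯(k,2k). -/

import Mathlib

open Sum
open scoped Classical

noncomputable section

namespace PartitionPaper

variable {X : Type*}

/-- The number of blocks of a partition of `X`, encoded as a setoid on `X`. -/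
def nc (p : Setoid X) : ℕ := Nat.card (Quotient p)

/-- The geodesic distance `d(p,p') = (nc p + nc p')/2 - nc (p ⊔ p')`. -/
def pdist (p q : Setoid X) : ℚ :=
  ((nc p : ℚ) + (nc q : ℚ)) / 2 - (nc (p ⊔ q) : ℚ)

/-- Geodesic order with base partition `b` : `p' ≤_b p`. -/
def geoLE (b p' p : Setoid X) : Prop := pdist b p' + pdist p' p = pdist b p

/-- Coarser-compatible order `p' ⊣_b p` : `p'` coarser than `p` and
`nc (p' ⊔ b) = nc (p ⊔ b)`.  (In the setoid lattice, `p ≤ p'` means `p` is finer.) -/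
def coarserComp (b p' p : Setoid X) : Prop :=
  p ≤ p' ∧ nc (p' ⊔ b) = nc (p ⊔ b)

/-- Finer-compatible order `p' ⊐_b p` : `p'` finer than `p` and
`nc p' - nc (p' ⊔ b) = nc p - nc (p ⊔ b)`. -/
def finerComp (b p' p : Setoid X) : Prop :=
  p' ≤ p ∧ (nc p' : ℤ) - (nc (p' ⊔ b) : ℤ) = (nc p : ℤ) - (nc (p ⊔ b) : ℤ)

/-- `p'` is obtained from `p` by gluing two blocks of `p` into one. -/
def IsGluing (p p' : Setoid X) : Prop := p ≤ p' ∧ nc p' + 1 = nc p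

/-- The Cayley graph on partitions of `X`: an edge iff one partition is obtained
from the other by gluing two of its blocks into one. -/
def glueGraph (X : Type*) : SimpleGraph (Setoid X) where
  Adj p q := IsGluing p q ∨ IsGluing q p
  symm := ⟨fun _ _ h => h.elim Or.inr Or.inl⟩
  loopless := by
    constructor
    intro p h
    rcases h with ⟨-, h⟩ | ⟨-, h⟩ <;> omega

/-- The segment `[p₁, p₂]` for the geodesic distance. -/
def seg (p₁ p₂ : Setoid X) : Set (Setoid X) :=
  {p | pdist p₁ p + pdist p p₂ = pdist p₁ p₂}

/-- The defect of `p'` from being on `[b, p]`. -/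
def df (b p' p : Setoid X) : ℚ := pdist b p' + pdist p' p - pdist b p

/-- Admissible one-step splits: `p'` is obtained by cutting a (pivotal) block of `p`
into two blocks in such a way that the join with `b` gains one block. -/
def Delta (b p : Setoid X) : Set (Setoid X) :=
  {p' | p' ≤ p ∧ nc p' = nc p + 1 ∧ nc (p' ⊔ b) = nc (p ⊔ b) + 1}

/-- The admissible splits `Sp_b(p) = ⋃ₘ Δ_b^m(p)`. -/
def Sp (b p : Setoid X) : Set (Setoid X) :=
  {p' | Relation.ReflTransGen (fun u v => v ∈ Delta b u) p p'}

/-- The admissible gluings `Gl_b(p)`: partitions obtained by gluing blocks of `p`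
without altering the number of blocks of the join with `b`. -/
def Gl (b p : Setoid X) : Set (Setoid X) :=
  {p' | p ≤ p' ∧ nc (p' ⊔ b) = nc (p ⊔ b)}

/-- `p'` is directly smaller than `p` for the relation `r`. -/
def DirectlySmaller (r : Setoid X → Setoid X → Prop) (p' p : Setoid X) : Prop :=
  r p' p ∧ p' ≠ p ∧ ¬ ∃ p'', p'' ≠ p ∧ p'' ≠ p' ∧ r p' p'' ∧ r p'' p

/-- The block of the partition `p` corresponding to a class `c`. -/
def blockSet (p : Setoid X) (c : Quotient p) : Set X := {x | Quotient.mk p x = c}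

/-- The number of blocks of `q` contained in the block `c` of `p`. -/
def numSubBlocks (q p : Setoid X) (c : Quotient p) : ℕ :=
  Nat.card {d : Quotient q // blockSet q d ⊆ blockSet p c}

/-- The number of blocks of `p` containing exactly `i` blocks of `q`. -/
def rcount (q p : Setoid X) (i : ℕ) : ℕ :=
  Nat.card {c : Quotient p // numSubBlocks q p c = i}

/-- The Möbius function of the refinement order:
`μ_f(q,p) = (-1)^(nc q - nc p) ∏_i ((i-1)!)^(r_i)` for `q` finer than `p`. -/
def muf (q p : Setoid X) : ℤ :=
  (-1) ^ (nc q - nc p) *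
    ∏ i ∈ Finset.range (nc q + 1), ((Nat.factorial (i - 1) : ℤ)) ^ (rcount q p i)

/-- `P_k`: partitions of `{1,…,k} ∪ {1',…,k'}`, the left summand being the
unprimed (top) row and the right summand the primed (bottom) row. -/
abbrev Pk (k : ℕ) := Setoid (Fin k ⊕ Fin k)

/-- The identity partition `id_k = {{i, i'} : 1 ≤ i ≤ k}`. -/
def idk (k : ℕ) : Pk k := Setoid.ker (Sum.elim id id)

/-- The permutation partition associated with `σ`, with blocks `{i, σ(i)'}`. -/
def permPartition {k : ℕ} (σ : Equiv.Perm (Fin k)) : Pk k :=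
  Setoid.ker (Sum.elim id σ.symm)

/-- `S_k`, the set of permutation partitions. -/
def Sk (k : ℕ) : Set (Pk k) := Set.range (permPartition (k := k))

/-- `B_k`, the set of Brauer partitions: all blocks have exactly two elements. -/
def Bk (k : ℕ) : Set (Pk k) := {p | ∀ x, Nat.card {y | p.r x y} = 2}

/-- Embedding of the top/bottom rows of the upper diagram `q` into the
three-row diagram (top ⊕ (middle ⊕ bottom)). -/
def upMap (k : ℕ) : Fin k ⊕ Fin k → Fin k ⊕ (Fin k ⊕ Fin k) :=
  Sum.elim Sum.inl (fun i => Sum.inr (Sum.inl i))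

/-- Embedding of the top/bottom rows of the lower diagram `p` into the
three-row diagram. -/
def downMap (k : ℕ) : Fin k ⊕ Fin k → Fin k ⊕ (Fin k ⊕ Fin k) :=
  Sum.elim (fun i => Sum.inr (Sum.inl i)) (fun i => Sum.inr (Sum.inr i))

/-- The partition of the three-row diagram obtained by stacking a diagram of `q`
on top of a diagram of `p` (identifying the bottom row of `q` with the top row
of `p`): the equivalence relation generated by the copies of `q` and `p`. -/
def stackSetoid {k : ℕ} (p q : Pk k) : Setoid (Fin k ⊕ (Fin k ⊕ Fin k)) :=
  sInf {s | ∀ x y,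
    ((∃ a b, upMap k a = x ∧ upMap k b = y ∧ q.r a b) ∨
     (∃ a b, downMap k a = x ∧ downMap k b = y ∧ p.r a b)) → s.r x y}

/-- The composition `p ∘ q` (a diagram of `q` stacked above a diagram of `p`),
obtained by restricting the stacked partition to the outer rows. -/
def comp {k : ℕ} (p q : Pk k) : Pk k :=
  Setoid.comap (Sum.elim Sum.inl (fun i => Sum.inr (Sum.inr i))) (stackSetoid p q)

/-- `κ(p,q)`: the number of connected components of the stacked diagram entirely
contained in the middle row. -/
def kappaP {k : ℕ} (p q : Pk k) : ℕ :=
  Nat.card {c : Quotient (stackSetoid p q) //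
    ∀ x, Quotient.mk (stackSetoid p q) x = c → ∃ i : Fin k, x = Sum.inr (Sum.inl i)}

/-- The transpose `ᵗp`, exchanging the two rows. -/
def transpose {k : ℕ} (p : Pk k) : Pk k := Setoid.comap Sum.swap p

/-- The disjoint-union partition on a sum type. -/
def sumSetoid {α β : Type*} (p : Setoid α) (q : Setoid β) : Setoid (α ⊕ β) :=
  Setoid.ker (Sum.map (Quotient.mk p) (Quotient.mk q))

/-- Reindexing of the rows for the tensor product. -/
def reindex (k l : ℕ) :
    Fin (k + l) ⊕ Fin (k + l) → (Fin k ⊕ Fin k) ⊕ (Fin l ⊕ Fin l) :=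
  Sum.elim
    (fun j => Sum.elim (fun a => Sum.inl (Sum.inl a)) (fun b => Sum.inr (Sum.inl b))
      (finSumFinEquiv.symm j))
    (fun j => Sum.elim (fun a => Sum.inl (Sum.inr a)) (fun b => Sum.inr (Sum.inr b))
      (finSumFinEquiv.symm j))

/-- The tensor product `p ⊗ q ∈ P_{k+l}`: a diagram of `p` placed to the left of
a diagram of `q`. -/
def tensor {k l : ℕ} (p : Pk k) (q : Pk l) : Pk (k + l) :=
  Setoid.comap (reindex k l) (sumSetoid p q)

/-- The `≺`-defect `η(p,q)`. -/
def eta {k : ℕ} (p q : Pk k) : ℚ :=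
  pdist (idk k) p + pdist (idk k) q - pdist (idk k) (comp p q)
    - ((k : ℚ) + (nc (comp p q) : ℚ) - (nc p : ℚ) - (nc q : ℚ)) / 2 - (kappaP p q : ℚ)

/-- The Kreweras complement of `p'` in `p`: the set of `p''` with `p = p' ∘ p''`
realizing equality in the `≺`-defect inequality. -/
def Krew {k : ℕ} (p p' : Pk k) : Set (Pk k) :=
  {p'' | comp p' p'' = p ∧ eta p' p'' = 0}

/-- `p' ≺ p` : `p'` is an admissible prefix of `p`. -/
def prec {k : ℕ} (p' p : Pk k) : Prop :=
  ∃ p'', comp p' p'' = p ∧ eta p' p'' = 0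

/-- The partition of `{1,…,k}` into the orbits (cycles) of the permutation `σ`. -/
def cycleSetoid {k : ℕ} (σ : Equiv.Perm (Fin k)) : Setoid (Fin k) :=
  ⟨σ.SameCycle,
    ⟨fun x => Equiv.Perm.SameCycle.refl σ x, fun h => h.symm, fun h₁ h₂ => h₁.trans h₂⟩⟩

/-- A partition of `{1,…,k}` is non-crossing if there are no `a < b < c < d` with
`a, c` in one block and `b, d` in a different block. -/
def NonCrossing {k : ℕ} (π : Setoid (Fin k)) : Prop :=
  ¬ ∃ a b c d : Fin k, a < b ∧ b < c ∧ c < d ∧ π.r a c ∧ π.r b d ∧ ¬ π.r a b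

/-- The map sending a permutation partition to the partition of `{1,…,k}` into
the orbits of the corresponding bijection (the blocks of `p ⊔ id_k` restricted
to the top row). -/
def orbitMap {k : ℕ} (p : Pk k) : Setoid (Fin k) :=
  Setoid.comap (Sum.inl : Fin k → Fin k ⊕ Fin k) (p ⊔ idk k)

/-- The permutation `(1,k+1)(2,k+2)⋯(k,2k)` of `{1,…,2k}`. -/
def tauPerm (k : ℕ) : Equiv.Perm (Fin (k + k)) :=
  (finSumFinEquiv.symm.trans (Equiv.sumComm (Fin k) (Fin k))).trans finSumFinEquiv

/-- The left part of a partition in `P_{k₁+k₂}`. -/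
def leftPart {k₁ k₂ : ℕ} (p : Pk (k₁ + k₂)) : Pk k₁ :=
  Setoid.comap (Sum.map (Fin.castAdd k₂) (Fin.castAdd k₂)) p

/-- The right part of a partition in `P_{k₁+k₂}`. -/
def rightPart {k₁ k₂ : ℕ} (p : Pk (k₁ + k₂)) : Pk k₂ :=
  Setoid.comap (Sum.map (Fin.natAdd k₁) (Fin.natAdd k₁)) p

/-- The `p`-moment `m_p(E_N) = Tr_N(E_N ᵗp)/N^{nc(p ⊔ id_k)}
`= ∑_{p'} (E_N)_{p'} N^{nc(p ⊔ p') - nc(p ⊔ id_k)}`. -/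
def momentF {k : ℕ} (E : ℕ → Pk k → ℂ) (p : Pk k) (N : ℕ) : ℂ :=
  ∑ᶠ p' : Pk k, E N p' * (N : ℂ) ^ ((nc (p ⊔ p') : ℤ) - (nc (p ⊔ idk k) : ℤ))

/-- The `p`-cumulant `κ_p(E_N) = N^{nc p - nc (p ⊔ id_k)} (E_N)_p`. -/
def cumulantF {k : ℕ} (E : ℕ → Pk k → ℂ) (p : Pk k) (N : ℕ) : ℂ :=
  (N : ℂ) ^ ((nc p : ℤ) - (nc (p ⊔ idk k) : ℤ)) * E N p


section Tools
variable {α β γ : Type*}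

abbrev gen (r : α → α → Prop) : Setoid α := Relation.EqvGen.setoid r

lemma gen_le {r : α → α → Prop} {s : Setoid α} (h : ∀ x y, r x y → s.r x y) : gen r ≤ s :=
  Setoid.eqvGen_le h

lemma gen_rel {r : α → α → Prop} {x y : α} (h : r x y) : (gen r).r x y :=
  Relation.EqvGen.rel x y h

lemma gen_mono {r r' : α → α → Prop} (h : ∀ x y, r x y → r' x y) : gen r ≤ gen r' :=
  Setoid.eqvGen_mono h

lemma gen_sup_gen (r r' : α → α → Prop) :
    gen r ⊔ gen r' = gen (fun x y => r x y ∨ r' x y) := by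
  apply le_antisymm
  · exact sup_le (gen_mono fun x y h => Or.inl h) (gen_mono fun x y h => Or.inr h)
  · exact gen_le fun x y h => h.elim
      (fun h => le_sup_left (α := Setoid α) (a := gen r) (gen_rel h))
      (fun h => le_sup_right (α := Setoid α) (b := gen r') (gen_rel h))

lemma setoid_gen_rel (s : Setoid α) : gen s.r = s := Setoid.eqvGen_of_setoid s

lemma sup_eq_gen (s t : Setoid α) : s ⊔ t = gen (fun x y => s.r x y ∨ t.r x y) := by
  conv_lhs => rw [← setoid_gen_rel s, ← setoid_gen_rel t]
  exact gen_sup_gen _ _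

/-- Induction principle for sup of setoids. -/
lemma sup_rel_ind {s t : Setoid α} {x y : α} (h : (s ⊔ t).r x y)
    {P : α → α → Prop} (hrefl : ∀ x, P x x) (hsymm : ∀ {x y}, P x y → P y x)
    (htrans : ∀ {x y z}, P x y → P y z → P x z)
    (hs : ∀ {x y}, s.r x y → P x y) (ht : ∀ {x y}, t.r x y → P x y) : P x y := by
  rw [sup_eq_gen] at h
  induction h with
  | rel x y h => exact h.elim hs ht
  | refl x => exact hrefl x
  | symm x y _ ih => exact hsymm ih
  | trans x y z _ _ ih1 ih2 => exact htrans ih1 ih2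

lemma gen_rel_ind {r : α → α → Prop} {x y : α} (h : (gen r).r x y)
    {P : α → α → Prop} (hrefl : ∀ x, P x x) (hsymm : ∀ {x y}, P x y → P y x)
    (htrans : ∀ {x y z}, P x y → P y z → P x z)
    (hr : ∀ {x y}, r x y → P x y) : P x y := by
  induction h with
  | rel x y h => exact hr h
  | refl x => exact hrefl x
  | symm x y _ ih => exact hsymm ih
  | trans x y z _ _ ih1 ih2 => exact htrans ih1 ih2

lemma nc_comap_surjective (f : α → β) (hf : Function.Surjective f) (s : Setoid β) :
    Nat.card (Quotient (Setoid.comap f s)) = Nat.card (Quotient s) := by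
  rw [Nat.card_congr (Setoid.comapQuotientEquiv f s)]
  have : Set.range ((Quotient.mk s) ∘ f) = Set.univ :=
    (Quotient.mk_surjective.comp hf).range_eq
  rw [this]
  exact Nat.card_congr (Equiv.Set.univ _)

lemma nc_congr (e : α ≃ β) (s : Setoid β) :
    Nat.card (Quotient (Setoid.comap e s)) = Nat.card (Quotient s) :=
  nc_comap_surjective e e.surjective s

lemma nc_anti {s t : Setoid α} [Finite α] (h : s ≤ t) :
    Nat.card (Quotient t) ≤ Nat.card (Quotient s) :=
  Nat.card_le_card_of_surjective (Quotient.map' id fun _ _ hxy => h hxy)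
    (fun c => Quotient.inductionOn' c fun x => ⟨Quotient.mk'' x, rfl⟩)


lemma comap_gen_of_surjective (f : α → β) (hf : Function.Surjective f)
    (r : β → β → Prop) :
    Setoid.comap f (gen r) = gen (fun x y => f x = f y ∨ r (f x) (f y)) := by
  apply le_antisymm
  · intro x y h
    change (gen r).r (f x) (f y) at h
    have key : ∀ a b : β, (gen r).r a b → ∀ x y : α, f x = a → f y = b →
        (gen (fun x y => f x = f y ∨ r (f x) (f y))).r x y := by
      intro a b h
      induction h with
      | rel a b h => intro x y hx hy; exact gen_rel (Or.inr (by rw [hx, hy]; exact h))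
      | refl a => intro x y hx hy; exact gen_rel (Or.inl (by rw [hx, hy]))
      | symm a b _ ih => intro x y hx hy; exact Setoid.symm' _ (ih y x hy hx)
      | trans a b c _ _ ih1 ih2 =>
          intro x y hx hy
          rcases hf b with ⟨z, hz⟩
          exact Setoid.trans' _ (ih1 x z hx hz) (ih2 z y hz hy)
    exact key (f x) (f y) h x y rfl rfl
  · exact gen_le fun x y h => h.elim
      (fun h => show (gen r).r (f x) (f y) from h ▸ Setoid.refl' _ _)
      (fun h => gen_rel h)

/-- The master gluing lemma: if `g` is surjective, fibers of `g` are `s`-related,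
`s`-related points have `t`-related images, and generators of `t` lift to `s`,
then `s = comap g t` and hence they have the same number of classes. -/
lemma glue_eq {g : α → β} (hg : Function.Surjective g) {s : Setoid α}
    {r : β → β → Prop} {t : Setoid β} (htr : t = gen r)
    (h1 : ∀ z w, g z = g w → s.r z w)
    (h2 : ∀ z w, s.r z w → t.r (g z) (g w))
    (h3 : ∀ y y', r y y' → ∃ z w, g z = y ∧ g w = y' ∧ s.r z w) :
    s = Setoid.comap g t := by
  apply le_antisymm
  · exact fun x y h => h2 x y h
  · rw [htr, comap_gen_of_surjective g hg]
    apply gen_le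
    rintro x y (h | h)
    · exact h1 x y h
    · rcases h3 _ _ h with ⟨z, w, hz, hw, hzw⟩
      exact s.iseqv.trans (h1 x z hz.symm) (s.iseqv.trans hzw (h1 w y hw))

lemma glue_nc {g : α → β} (hg : Function.Surjective g) {s : Setoid α}
    {r : β → β → Prop} {t : Setoid β} (htr : t = gen r)
    (h1 : ∀ z w, g z = g w → s.r z w)
    (h2 : ∀ z w, s.r z w → t.r (g z) (g w))
    (h3 : ∀ y y', r y y' → ∃ z w, g z = y ∧ g w = y' ∧ s.r z w) :
    Nat.card (Quotient s) = Nat.card (Quotient t) := by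
  rw [glue_eq hg htr h1 h2 h3]; exact nc_comap_surjective g hg t

/-- The setoid generated by one pair. -/
def pairS (a b : α) : Setoid α := gen (fun x y => x = a ∧ y = b)

lemma sup_pair_rel (t : Setoid α) (a b : α) {z w : α} :
    (t ⊔ pairS a b).r z w ↔
      t.r z w ∨ (t.r z a ∧ t.r b w) ∨ (t.r z b ∧ t.r a w) := by
  constructor
  · intro h
    refine sup_rel_ind h (P := fun u v => t.r u v ∨ (t.r u a ∧ t.r b v) ∨ (t.r u b ∧ t.r a v)) (fun x => Or.inl (t.iseqv.refl x)) ?_ ?_ (fun h => Or.inl h) ?_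
    · rintro x y (h | ⟨h1, h2⟩ | ⟨h1, h2⟩)
      · exact Or.inl (t.iseqv.symm h)
      · exact Or.inr (Or.inr ⟨t.iseqv.symm h2, t.iseqv.symm h1⟩)
      · exact Or.inr (Or.inl ⟨t.iseqv.symm h2, t.iseqv.symm h1⟩)
    · rintro x y z (h | ⟨h1, h2⟩ | ⟨h1, h2⟩) (h' | ⟨h1', h2'⟩ | ⟨h1', h2'⟩)
      · exact Or.inl (t.iseqv.trans h h')
      · exact Or.inr (Or.inl ⟨t.iseqv.trans h h1', h2'⟩)
      · exact Or.inr (Or.inr ⟨t.iseqv.trans h h1', h2'⟩)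
      · exact Or.inr (Or.inl ⟨h1, t.iseqv.trans h2 h'⟩)
      · exact Or.inr (Or.inr ⟨t.iseqv.trans h1 (t.iseqv.symm (t.iseqv.trans h2 h1')), t.iseqv.trans (t.iseqv.symm (t.iseqv.trans h2 h1')) h2'⟩)
      · exact Or.inl (t.iseqv.trans h1 h2')
      · exact Or.inr (Or.inr ⟨h1, t.iseqv.trans h2 h'⟩)
      · exact Or.inl (t.iseqv.trans h1 h2')
      · exact Or.inr (Or.inl ⟨t.iseqv.trans h1 (t.iseqv.symm (t.iseqv.trans h2 h1')), t.iseqv.trans (t.iseqv.symm (t.iseqv.trans h2 h1')) h2'⟩)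
    · intro x y h
      have : (pairS a b).r x y := h
      unfold pairS at this
      refine gen_rel_ind this (P := fun u v => t.r u v ∨ (t.r u a ∧ t.r b v) ∨ (t.r u b ∧ t.r a v)) (fun x => Or.inl (t.iseqv.refl x)) ?_ ?_ ?_
      · rintro x y (h | ⟨h1, h2⟩ | ⟨h1, h2⟩)
        · exact Or.inl (t.iseqv.symm h)
        · exact Or.inr (Or.inr ⟨t.iseqv.symm h2, t.iseqv.symm h1⟩)
        · exact Or.inr (Or.inl ⟨t.iseqv.symm h2, t.iseqv.symm h1⟩)
      · rintro x y z (h | ⟨h1, h2⟩ | ⟨h1, h2⟩) (h' | ⟨h1', h2'⟩ | ⟨h1', h2'⟩)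
        · exact Or.inl (t.iseqv.trans h h')
        · exact Or.inr (Or.inl ⟨t.iseqv.trans h h1', h2'⟩)
        · exact Or.inr (Or.inr ⟨t.iseqv.trans h h1', h2'⟩)
        · exact Or.inr (Or.inl ⟨h1, t.iseqv.trans h2 h'⟩)
        · exact Or.inr (Or.inr ⟨t.iseqv.trans h1 (t.iseqv.symm (t.iseqv.trans h2 h1')), t.iseqv.trans (t.iseqv.symm (t.iseqv.trans h2 h1')) h2'⟩)
        · exact Or.inl (t.iseqv.trans h1 h2')
        · exact Or.inr (Or.inr ⟨h1, t.iseqv.trans h2 h'⟩)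
        · exact Or.inl (t.iseqv.trans h1 h2')
        · exact Or.inr (Or.inl ⟨t.iseqv.trans h1 (t.iseqv.symm (t.iseqv.trans h2 h1')), t.iseqv.trans (t.iseqv.symm (t.iseqv.trans h2 h1')) h2'⟩)
      · rintro x y ⟨hx, hy⟩
        subst hx; subst hy
        exact Or.inr (Or.inl ⟨t.iseqv.refl _, t.iseqv.refl _⟩)
  · rintro (h | ⟨h1, h2⟩ | ⟨h1, h2⟩)
    · exact le_sup_left (α := Setoid α) (a := t) h
    · refine (t ⊔ pairS a b).trans (le_sup_left (α := Setoid α) (a := t) h1)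
        ((t ⊔ pairS a b).trans
          (le_sup_right (α := Setoid α) (b := pairS a b) (gen_rel ⟨rfl, rfl⟩))
          (le_sup_left (α := Setoid α) (a := t) h2))
    · refine (t ⊔ pairS a b).trans (le_sup_left (α := Setoid α) (a := t) h1)
        ((t ⊔ pairS a b).trans
          ((t ⊔ pairS a b).symm
            (le_sup_right (α := Setoid α) (b := pairS a b) (gen_rel ⟨rfl, rfl⟩)))
          (le_sup_left (α := Setoid α) (a := t) h2))

/-- Adding one pair merges at most two classes. -/
lemma nc_le_sup_pair [Finite α] (t : Setoid α) (a b : α) :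
    Nat.card (Quotient t) ≤ Nat.card (Quotient (t ⊔ pairS a b)) + 1 := by
  classical
  set u := t ⊔ pairS a b with hu
  have hle : t ≤ u := le_sup_left
  let f : Quotient t → Quotient u := Quotient.map' id fun _ _ h => hle h
  have hf : ∀ x : α, f (Quotient.mk t x) = Quotient.mk u x := fun x => rfl
  let g : Quotient t → Quotient u ⊕ Unit := fun c =>
    if c = Quotient.mk t b then Sum.inr () else Sum.inl (f c)
  have hginj : Function.Injective g := by
    intro c d hcd
    induction c using Quotient.inductionOn with | h x =>
    induction d using Quotient.inductionOn with | h y =>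
    by_cases hx : Quotient.mk t x = Quotient.mk t b <;>
      by_cases hy : Quotient.mk t y = Quotient.mk t b
    · rw [hx, hy]
    · simp only [g, if_pos hx, if_neg hy] at hcd; exact absurd hcd (by simp)
    · simp only [g, if_neg hx, if_pos hy] at hcd; exact absurd hcd (by simp)
    · simp only [g, if_neg hx, if_neg hy, Sum.inl.injEq] at hcd
      have : u.r x y := Quotient.eq''.1 hcd
      rcases (sup_pair_rel t a b).1 this with h | ⟨h1, h2⟩ | ⟨h1, h2⟩
      · exact Quotient.sound h
      · exact absurd (Quotient.sound (t.iseqv.symm h2) : Quotient.mk t y = Quotient.mk t b) hy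
      · exact absurd (Quotient.sound h1 : Quotient.mk t x = Quotient.mk t b) hx
  calc Nat.card (Quotient t) ≤ Nat.card (Quotient u ⊕ Unit) :=
        Nat.card_le_card_of_injective g hginj
    _ = Nat.card (Quotient u) + 1 := by simp [Nat.card_sum]

lemma gen_false : gen (fun _ _ : α => False) = ⊥ := by
  apply le_antisymm
  · exact gen_le fun x y h => h.elim
  · intro x y h; exact h ▸ (gen _).iseqv.refl x

lemma nc_quotient_bot : Nat.card (Quotient (⊥ : Setoid α)) = Nat.card α := by
  refine Nat.card_congr (Equiv.ofBijective (Quotient.lift id fun a b h => h) ?_)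
  constructor
  · intro c d
    induction c using Quotient.inductionOn with | h x =>
    induction d using Quotient.inductionOn with | h y =>
    intro h; exact Quotient.sound h
  · exact fun a => ⟨Quotient.mk _ a, rfl⟩

/-- Graph component bound: the quotient by finitely many pair-identifications
loses at most `F.card` classes. -/
lemma card_le_nc_gen_pairs [Finite α] (F : Finset (α × α)) :
    Nat.card α ≤ Nat.card (Quotient (gen (fun z w => (z, w) ∈ F))) + F.card := by
  classical
  induction F using Finset.induction_on with
  | empty =>
      simp only [Finset.notMem_empty]
      rw [show (fun z w : α => False) = (fun _ _ : α => False) from rfl, gen_false,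
        nc_quotient_bot]
      simp
  | @insert e F he ih =>
      have hins : gen (fun z w : α => (z, w) ∈ insert e F) =
          (gen (fun z w => (z, w) ∈ F)) ⊔ pairS e.1 e.2 := by
        rw [pairS, gen_sup_gen]
        congr 1
        funext z w
        simp only [Finset.mem_insert, eq_iff_iff]
        constructor
        · rintro (h | h)
          · exact Or.inr ⟨congrArg Prod.fst h, congrArg Prod.snd h⟩
          · exact Or.inl h
        · rintro (h | ⟨h1, h2⟩)
          · exact Or.inr h
          · exact Or.inl (by rw [h1, h2])
      have key := nc_le_sup_pair (gen (fun z w : α => (z, w) ∈ F)) e.1 e.2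
      rw [← hins] at key
      calc Nat.card α ≤ Nat.card (Quotient (gen (fun z w : α => (z, w) ∈ F))) + F.card := ih
        _ ≤ (Nat.card (Quotient (gen (fun z w : α => (z, w) ∈ insert e F))) + 1) + F.card :=
            Nat.add_le_add_right key F.card
        _ = Nat.card (Quotient (gen (fun z w : α => (z, w) ∈ insert e F))) + (insert e F).card := by
            rw [Finset.card_insert_of_notMem he]; ring

/-- Submodularity-type inequality for numbers of classes. -/
lemma nc_submodular_chain [Finite α] {u v : Setoid α} (huv : u ≤ v) (p : Setoid α) :
    Nat.card (Quotient (u ⊔ p)) + Nat.card (Quotient v) ≤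
      Nat.card (Quotient u) + Nat.card (Quotient (v ⊔ p)) := by
  classical
  have le1 : u ≤ u ⊔ p := le_sup_left
  have le2 : u ≤ v := huv
  have le3 : u ⊔ p ≤ v ⊔ p := sup_le_sup huv le_rfl
  have le4 : v ≤ v ⊔ p := le_sup_left
  set V := Quotient (u ⊔ p) ⊕ Quotient v with hV
  have : Finite V := by infer_instance
  have := Fintype.ofFinite (Quotient u)
  have := Fintype.ofFinite V
  let φ : V → Quotient (v ⊔ p) :=
    Sum.elim (Quotient.map' id fun _ _ h => le3 h) (Quotient.map' id fun _ _ h => le4 h)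
  let F : Finset (V × V) := Finset.image (fun c : Quotient u =>
    ((Sum.inl (Quotient.map' id (fun _ _ h => le1 h) c) : V),
     (Sum.inr (Quotient.map' id (fun _ _ h => le2 h) c) : V))) Finset.univ
  have anchor : ∀ a : α, (gen (fun z w : V => (z, w) ∈ F)).r
      (Sum.inl (Quotient.mk (u ⊔ p) a)) (Sum.inr (Quotient.mk v a)) := by
    intro a
    apply gen_rel
    simp only [F, Finset.mem_image]
    exact ⟨Quotient.mk u a, Finset.mem_univ _, rfl⟩
  have hker : Setoid.ker φ = gen (fun z w : V => (z, w) ∈ F) := by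
    apply le_antisymm
    · -- ker φ ≤ gen F
      have main : ∀ a b : α, (v ⊔ p).r a b →
          (gen (fun z w : V => (z, w) ∈ F)).r (Sum.inr (Quotient.mk v a))
            (Sum.inr (Quotient.mk v b)) := by
        intro a b h
        refine sup_rel_ind h (P := fun a b => (gen (fun z w : V => (z, w) ∈ F)).r
          (Sum.inr (Quotient.mk v a)) (Sum.inr (Quotient.mk v b))) ?_ ?_ ?_ ?_ ?_
        · intro x; exact (gen _).iseqv.refl _
        · intro x y h; exact (gen _).iseqv.symm h
        · intro x y z h1 h2; exact (gen _).iseqv.trans h1 h2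
        · intro x y h
          rw [Quotient.sound h]
        · intro x y h
          have hxy : Quotient.mk (u ⊔ p) x = Quotient.mk (u ⊔ p) y :=
            Quotient.sound (le_sup_right (α := Setoid α) (b := p) h)
          refine (gen _).iseqv.trans ((gen _).iseqv.symm (anchor x)) ?_
          rw [hxy]
          exact anchor y
      intro z w h
      have h' : φ z = φ w := h
      match z, w with
      | Sum.inl c, Sum.inl d =>
          induction c using Quotient.inductionOn with | h x =>
          induction d using Quotient.inductionOn with | h y =>
          have : (v ⊔ p).r x y := Quotient.eq''.1 h'
          refine (gen _).iseqv.trans (anchor x) (((gen _).iseqv.trans (main x y this) ?_))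
          exact (gen _).iseqv.symm (anchor y)
      | Sum.inl c, Sum.inr d =>
          induction c using Quotient.inductionOn with | h x =>
          induction d using Quotient.inductionOn with | h y =>
          have : (v ⊔ p).r x y := Quotient.eq''.1 h'
          exact (gen _).iseqv.trans (anchor x) (main x y this)
      | Sum.inr c, Sum.inl d =>
          induction c using Quotient.inductionOn with | h x =>
          induction d using Quotient.inductionOn with | h y =>
          have : (v ⊔ p).r x y := Quotient.eq''.1 h'
          exact (gen _).iseqv.trans (main x y this) ((gen _).iseqv.symm (anchor y))
      | Sum.inr c, Sum.inr d =>
          induction c using Quotient.inductionOn with | h x =>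
          induction d using Quotient.inductionOn with | h y =>
          have : (v ⊔ p).r x y := Quotient.eq''.1 h'
          exact main x y this
    · -- gen F ≤ ker φ
      apply gen_le
      intro z w hzw
      simp only [F, Finset.mem_image, Finset.mem_univ, true_and, Prod.mk.injEq] at hzw
      rcases hzw with ⟨c, hc1, hc2⟩
      induction c using Quotient.inductionOn with | h x =>
      show φ z = φ w
      rw [← hc1, ← hc2]
      rfl
  have hφsurj : Function.Surjective φ := by
    intro c
    induction c using Quotient.inductionOn with | h x =>
    exact ⟨Sum.inr (Quotient.mk v x), rfl⟩
  have hcount : Nat.card (Quotient (gen (fun z w : V => (z, w) ∈ F))) =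
      Nat.card (Quotient (v ⊔ p)) := by
    rw [← hker]
    exact Nat.card_congr (Setoid.quotientKerEquivOfSurjective φ hφsurj)
  have hbound := card_le_nc_gen_pairs F
  rw [hcount] at hbound
  have hFcard : F.card ≤ Nat.card (Quotient u) := by
    calc F.card ≤ Finset.univ.card := Finset.card_image_le
      _ = Nat.card (Quotient u) := by rw [Finset.card_univ, Nat.card_eq_fintype_card]
  have hVcard : Nat.card V = Nat.card (Quotient (u ⊔ p)) + Nat.card (Quotient v) :=
    Nat.card_sum ..
  omega

/-- The triangle inequality in counting form. -/
lemma nc_triangle [Finite α] (b p' p : Setoid α) :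
    Nat.card (Quotient (b ⊔ p')) + Nat.card (Quotient (p' ⊔ p)) ≤
      Nat.card (Quotient p') + Nat.card (Quotient (b ⊔ p)) := by
  have h1 := nc_submodular_chain (le_sup_right (a := b) (b := p')) p
  have h2 : b ⊔ p ≤ b ⊔ p' ⊔ p := by
    rw [sup_assoc]
    exact sup_le_sup_left le_sup_right b
  have h3 : Nat.card (Quotient (b ⊔ p' ⊔ p)) ≤ Nat.card (Quotient (b ⊔ p)) := nc_anti h2
  omega

/-- The partition on `α` obtained by transporting `s` along `f` (plus singletons). -/
def place (f : β → α) (s : Setoid β) : Setoid α :=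
  gen (fun x y => ∃ a b, f a = x ∧ f b = y ∧ s.r a b)

lemma place_rel {f : β → α} {s : Setoid β} {a b : β} (h : s.r a b) :
    (place f s).r (f a) (f b) := gen_rel ⟨a, b, rfl, rfl, h⟩

lemma comap_mono {f : α → β} {s t : Setoid β} (h : s ≤ t) :
    Setoid.comap f s ≤ Setoid.comap f t := fun _ _ hxy => h hxy

lemma place_bot (f : β → α) : place f (⊥ : Setoid β) = ⊥ := by
  apply le_antisymm
  · apply gen_le
    rintro x y ⟨a, b, rfl, rfl, hab⟩
    have : a = b := hab
    subst this
    exact (⊥ : Setoid α).iseqv.refl _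
  · exact bot_le

/-- Saturation: if the class of `z` in `S` avoids the range of `o`, then joining with
a partition placed along `o` does not enlarge the class of `z`. -/
lemma saturation {Y A : Type*} {S : Setoid Y} {x : Setoid A} {o : A → Y} {z w : Y}
    (h : (S ⊔ place o x).r z w)
    (hz : ∀ u, S.r z u → u ∉ Set.range o) : S.r z w := by
  set R : Y → Y → Prop := fun z w => S.r z w ∨
    ((S ⊔ place o x).r z w ∧ (∃ u ∈ Set.range o, S.r z u) ∧ (∃ u ∈ Set.range o, S.r w u))
    with hR
  have hsup : ∀ {z w}, (S ⊔ place o x).r z w → R z w := by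
    intro z w h
    have h' : (gen (fun x' y' => S.r x' y' ∨
        ∃ a b, o a = x' ∧ o b = y' ∧ x.r a b)).r z w := by
      have : S ⊔ place o x = gen (fun x' y' => S.r x' y' ∨
          ∃ a b, o a = x' ∧ o b = y' ∧ x.r a b) := by
        rw [place, ← gen_sup_gen, setoid_gen_rel]
      rw [this] at h
      exact h
    refine gen_rel_ind h' (P := R) ?_ ?_ ?_ ?_
    · intro u; exact Or.inl (S.iseqv.refl u)
    · rintro u v (h | ⟨h1, h2, h3⟩)
      · exact Or.inl (S.iseqv.symm h)
      · exact Or.inr ⟨(S ⊔ place o x).iseqv.symm h1, h3, h2⟩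
    · rintro u v t (h | ⟨h1, h2, h3⟩) (h' | ⟨h1', h2', h3'⟩)
      · exact Or.inl (S.iseqv.trans h h')
      · refine Or.inr ⟨(S ⊔ place o x).iseqv.trans
          (le_sup_left (α := Setoid Y) (a := S) h) h1', ?_, h3'⟩
        rcases h2' with ⟨u', hu', hrel⟩
        exact ⟨u', hu', S.iseqv.trans h hrel⟩
      · refine Or.inr ⟨(S ⊔ place o x).iseqv.trans h1
          (le_sup_left (α := Setoid Y) (a := S) h'), h2, ?_⟩
        rcases h3 with ⟨u', hu', hrel⟩
        exact ⟨u', hu', S.iseqv.trans (S.iseqv.symm h') hrel⟩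
      · exact Or.inr ⟨(S ⊔ place o x).iseqv.trans h1 h1', h2, h3'⟩
    · rintro u v (h | ⟨a, b, rfl, rfl, hab⟩)
      · exact Or.inl h
      · exact Or.inr ⟨le_sup_right (α := Setoid Y) (b := place o x) (place_rel hab),
          ⟨o a, ⟨a, rfl⟩, S.iseqv.refl _⟩, ⟨o b, ⟨b, rfl⟩, S.iseqv.refl _⟩⟩
  rcases hsup h with h | ⟨_, ⟨u, hu, hrel⟩, _⟩
  · exact h
  · exact absurd hu (hz u hrel)

/-- Counting classes by whether they meet the range of an injection. -/
lemma nc_split {Y A : Type*} [Finite Y] (o : A → Y) (s : Setoid Y) :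
    Nat.card (Quotient s) = Nat.card (Quotient (Setoid.comap o s)) +
      Nat.card {c : Quotient s // ∀ z, Quotient.mk s z = c → z ∉ Set.range o} := by
  classical
  have h1 : Nat.card (Quotient s) =
      Nat.card {c : Quotient s // ∃ a, Quotient.mk s (o a) = c} +
      Nat.card {c : Quotient s // ¬ ∃ a, Quotient.mk s (o a) = c} := by
    rw [← Nat.card_sum]
    exact Nat.card_congr (Equiv.sumCompl _).symm
  have h2 : Nat.card (Quotient (Setoid.comap o s)) =
      Nat.card {c : Quotient s // ∃ a, Quotient.mk s (o a) = c} := by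
    rw [Nat.card_congr (Setoid.comapQuotientEquiv o s)]
    apply Nat.card_congr
    apply Equiv.setCongr
    ext c
    exact ⟨fun ⟨a, ha⟩ => ⟨a, ha⟩, fun ⟨a, ha⟩ => ⟨a, ha⟩⟩
  have h3 : Nat.card {c : Quotient s // ¬ ∃ a, Quotient.mk s (o a) = c} =
      Nat.card {c : Quotient s // ∀ z, Quotient.mk s z = c → z ∉ Set.range o} := by
    apply Nat.card_congr
    apply Equiv.subtypeEquivRight
    intro c
    constructor
    · rintro h z hz ⟨a, rfl⟩; exact h ⟨a, hz⟩
    · rintro h ⟨a, ha⟩; exact h (o a) ha ⟨a, rfl⟩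
  rw [h1, h2, h3]

/-- The avoided classes of `S ⊔ place o x` are in bijection with those of `S`. -/
lemma nc_avoid_sup {Y A : Type*} (S : Setoid Y) (x : Setoid A) (o : A → Y) :
    Nat.card {c : Quotient (S ⊔ place o x) //
        ∀ z, Quotient.mk (S ⊔ place o x) z = c → z ∉ Set.range o} =
      Nat.card {c : Quotient S // ∀ z, Quotient.mk S z = c → z ∉ Set.range o} := by
  classical
  set T := S ⊔ place o x with hT
  have hST : S ≤ T := le_sup_left
  let m : Quotient S → Quotient T := Quotient.map' id fun _ _ h => hST h
  have hm : ∀ z : Y, m (Quotient.mk S z) = Quotient.mk T z := fun z => rfl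
  refine (Nat.card_congr (Equiv.ofBijective ?_ ⟨?_, ?_⟩)).symm
  · rintro ⟨c, hc⟩
    refine ⟨m c, ?_⟩
    induction c using Quotient.inductionOn with | h z =>
    intro w hw
    have hrelwz : T.r w z := Quotient.exact (hw.trans (hm z))
    have hzavoid : ∀ u, S.r z u → u ∉ Set.range o := by
      intro u hu
      exact hc u (Quotient.sound (S.iseqv.symm hu))
    have : S.r z w := saturation ((T.iseqv.symm hrelwz)) hzavoid
    exact hc w (Quotient.sound (S.iseqv.symm this))
  · rintro ⟨c, hc⟩ ⟨d, hd⟩ hcd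
    simp only [Subtype.mk.injEq] at hcd ⊢
    induction c using Quotient.inductionOn with | h z =>
    induction d using Quotient.inductionOn with | h w =>
    have : T.r z w := Quotient.exact (((hm z).symm.trans hcd).trans (hm w))
    have hzavoid : ∀ u, S.r z u → u ∉ Set.range o := by
      intro u hu
      exact hc u (Quotient.sound (S.iseqv.symm hu))
    exact Quotient.sound (saturation this hzavoid)
  · rintro ⟨d, hd⟩
    induction d using Quotient.inductionOn with | h z =>
    refine ⟨⟨Quotient.mk S z, ?_⟩, ?_⟩
    · intro w hw
      have : S.r w z := Quotient.exact hw
      exact hd w (Quotient.sound (hST this))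
    · simp only [Subtype.mk.injEq]
      exact hm z

/-- Restriction of a join along an injection. -/
lemma comap_sup_place {Y A : Type*} (o : A → Y) (ho : Function.Injective o)
    (S : Setoid Y) (x : Setoid A) :
    Setoid.comap o (S ⊔ place o x) = Setoid.comap o S ⊔ x := by
  apply le_antisymm
  · intro a b h
    have h' : (S ⊔ place o x).r (o a) (o b) := h
    set W : Y → Y → Prop := fun z w => S.r z w ∨
      ∃ a b, (Setoid.comap o S ⊔ x).r a b ∧ S.r z (o a) ∧ S.r (o b) w with hW
    have hsup : ∀ {z w}, (S ⊔ place o x).r z w → W z w := by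
      intro z w h
      have h2 : S ⊔ place o x = gen (fun x' y' => S.r x' y' ∨
          ∃ a b, o a = x' ∧ o b = y' ∧ x.r a b) := by
        rw [place, ← gen_sup_gen, setoid_gen_rel]
      rw [h2] at h
      refine gen_rel_ind h (P := W) ?_ ?_ ?_ ?_
      · intro u; exact Or.inl (S.iseqv.refl u)
      · rintro u v (h | ⟨a, b, hab, h1, h2⟩)
        · exact Or.inl (S.iseqv.symm h)
        · exact Or.inr ⟨b, a, (Setoid.comap o S ⊔ x).iseqv.symm hab,
            S.iseqv.symm h2, S.iseqv.symm h1⟩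
      · rintro u v t (h | ⟨a, b, hab, h1, h2⟩) (h' | ⟨a', b', hab', h1', h2'⟩)
        · exact Or.inl (S.iseqv.trans h h')
        · exact Or.inr ⟨a', b', hab', S.iseqv.trans h h1', h2'⟩
        · exact Or.inr ⟨a, b, hab, h1, S.iseqv.trans h2 h'⟩
        · refine Or.inr ⟨a, b', ?_, h1, h2'⟩
          have : S.r (o b) (o a') := S.iseqv.trans h2 h1'
          have hba' : (Setoid.comap o S).r b a' := this
          exact (Setoid.comap o S ⊔ x).iseqv.trans hab
            ((Setoid.comap o S ⊔ x).iseqv.trans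
              (le_sup_left (α := Setoid A) (a := Setoid.comap o S) hba')
              hab')
      · rintro u v (h | ⟨a, b, rfl, rfl, hab⟩)
        · exact Or.inl h
        · exact Or.inr ⟨a, b, le_sup_right (α := Setoid A) (b := x) hab,
            S.iseqv.refl _, S.iseqv.refl _⟩
    rcases hsup h' with h | ⟨a', b', hab, h1, h2⟩
    · exact le_sup_left (α := Setoid A) (a := Setoid.comap o S) (show (Setoid.comap o S).r a b from h)
    · have haa' : (Setoid.comap o S).r a a' := h1
      have hbb' : (Setoid.comap o S).r b' b := h2
      exact (Setoid.comap o S ⊔ x).iseqv.trans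
        (le_sup_left (α := Setoid A) (a := Setoid.comap o S) haa')
        ((Setoid.comap o S ⊔ x).iseqv.trans hab
          (le_sup_left (α := Setoid A) (a := Setoid.comap o S) hbb'))
  · apply sup_le
    · exact comap_mono le_sup_left
    · intro a b h
      exact le_sup_right (α := Setoid Y) (b := place o x) (place_rel h)


lemma comap_comap (f : α → β) (g : β → γ) (s : Setoid γ) :
    Setoid.comap f (Setoid.comap g s) = Setoid.comap (g ∘ f) s := rfl

lemma gen_diag (r : α → α → Prop) : gen (fun x y => x = y ∨ r x y) = gen r := by
  apply le_antisymm
  · apply gen_le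
    rintro x y (rfl | h)
    · exact (gen r).iseqv.refl x
    · exact gen_rel h
  · exact gen_mono fun x y h => Or.inr h

lemma gen_congr {r r' : α → α → Prop} (h : ∀ x y, r x y ↔ r' x y) : gen r = gen r' := by
  have : r = r' := by funext x y; exact propext (h x y)
  rw [this]

lemma comap_equiv_sup (e : α ≃ β) (s t : Setoid β) :
    Setoid.comap (⇑e) (s ⊔ t) = Setoid.comap (⇑e) s ⊔ Setoid.comap (⇑e) t := by
  apply le_antisymm
  · rw [sup_eq_gen s t, comap_gen_of_surjective _ e.surjective]
    apply gen_le
    rintro x y (h | h | h)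
    · have : x = y := e.injective h
      exact this ▸ (Setoid.comap (⇑e) s ⊔ Setoid.comap (⇑e) t).iseqv.refl x
    · exact le_sup_left (α := Setoid α) (a := Setoid.comap (⇑e) s)
        (show (Setoid.comap (⇑e) s).r x y from h)
    · exact le_sup_right (α := Setoid α) (b := Setoid.comap (⇑e) t)
        (show (Setoid.comap (⇑e) t).r x y from h)
  · exact sup_le (comap_mono le_sup_left) (comap_mono le_sup_right)

lemma place_comap_equiv (f : γ → α) (e : γ ≃ β) (s : Setoid β) :
    place f (Setoid.comap (⇑e) s) = place (f ∘ ⇑e.symm) s := by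
  unfold place
  apply gen_congr
  intro x y
  constructor
  · rintro ⟨a, b, rfl, rfl, hab⟩
    exact ⟨e a, e b, by simp, by simp, hab⟩
  · rintro ⟨u, v, rfl, rfl, huv⟩
    refine ⟨e.symm u, e.symm v, rfl, rfl, ?_⟩
    show s.r (e (e.symm u)) (e (e.symm v))
    simpa using huv

lemma comap_place_equiv (e : α ≃ β) (f : γ → β) (s : Setoid γ) :
    Setoid.comap (⇑e) (place f s) = place (⇑e.symm ∘ f) s := by
  unfold place
  rw [comap_gen_of_surjective _ e.surjective]
  have : (fun x y => e x = e y ∨ ∃ a b, f a = e x ∧ f b = e y ∧ s.r a b) =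
      (fun x y => x = y ∨ ∃ a b, (⇑e.symm ∘ f) a = x ∧ (⇑e.symm ∘ f) b = y ∧ s.r a b) := by
    funext x y
    apply propext
    constructor
    · rintro (h | ⟨a, b, ha, hb, hab⟩)
      · exact Or.inl (e.injective h)
      · exact Or.inr ⟨a, b, by simp [Function.comp, ha], by simp [Function.comp, hb], hab⟩
    · rintro (rfl | ⟨a, b, rfl, rfl, hab⟩)
      · exact Or.inl rfl
      · exact Or.inr ⟨a, b, by simp [Function.comp], by simp [Function.comp], hab⟩
  rw [this, gen_diag]

end Tools

section Diagrams
variable {k : ℕ}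

/-- The outer embedding. -/
def outMap (k : ℕ) : Fin k ⊕ Fin k → Fin k ⊕ (Fin k ⊕ Fin k) :=
  Sum.elim Sum.inl (fun i => Sum.inr (Sum.inr i))

lemma stack_eq (p q : Pk k) :
    stackSetoid p q = place (upMap k) q ⊔ place (downMap k) p := by
  unfold stackSetoid place
  rw [gen_sup_gen]
  exact (Setoid.eqvGen_eq _).symm

lemma comp_eq (p q : Pk k) : comp p q = Setoid.comap (outMap k) (stackSetoid p q) := rfl

lemma perm_rel {σ : Equiv.Perm (Fin k)} {a b : Fin k ⊕ Fin k} :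
    (permPartition σ).r a b ↔ Sum.elim id (⇑σ.symm) a = Sum.elim id (⇑σ.symm) b :=
  Iff.rfl

/-- Composition with a permutation partition on top is relabelling of the top row. -/
lemma comp_perm (p : Pk k) (σ : Equiv.Perm (Fin k)) :
    comp p (permPartition σ) = Setoid.comap (Sum.map (⇑σ) id) p := by
  have hstack : stackSetoid p (permPartition σ) =
      Setoid.comap (Sum.elim (fun i => Sum.inl (σ i)) (Sum.elim Sum.inl Sum.inr)) p := by
    set ψ : Fin k ⊕ (Fin k ⊕ Fin k) → Fin k ⊕ Fin k :=
      Sum.elim (fun i => Sum.inl (σ i)) (Sum.elim Sum.inl Sum.inr) with hψ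
    apply le_antisymm
    · rw [stack_eq]
      apply sup_le
      · apply gen_le
        rintro x y ⟨a, b, rfl, rfl, hab⟩
        show p.r (ψ (upMap k a)) (ψ (upMap k b))
        have hab' : Sum.elim id (⇑σ.symm) a = Sum.elim id (⇑σ.symm) b := hab
        rcases a with i | j <;> rcases b with i' | j' <;>
          simp only [Sum.elim_inl, Sum.elim_inr, id_eq] at hab'
        · subst hab'; exact p.iseqv.refl _
        · have : σ i = j' := by rw [hab']; simp
          show p.r (Sum.inl (σ i)) (Sum.inl j')
          rw [this]
        · have : σ i' = j := by rw [← hab']; simp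
          show p.r (Sum.inl j) (Sum.inl (σ i'))
          rw [this]
        · have : j = j' := by rw [← σ.symm.injective hab']
          subst this; exact p.iseqv.refl _
      · apply gen_le
        rintro x y ⟨a, b, rfl, rfl, hab⟩
        show p.r (ψ (downMap k a)) (ψ (downMap k b))
        rcases a with i | j <;> rcases b with i' | j' <;> exact hab
    · intro z w h
      have anchor : ∀ z, (stackSetoid p (permPartition σ)).r z
          (downMap k (ψ z)) := by
        intro z
        rcases z with i | (i | i)
        · rw [stack_eq]
          refine le_sup_left (α := Setoid _) (a := place (upMap k) (permPartition σ)) ?_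
          have : (permPartition σ).r (Sum.inl i) (Sum.inr (σ i)) := by
            show Sum.elim id (⇑σ.symm) (Sum.inl i) = Sum.elim id (⇑σ.symm) (Sum.inr (σ i))
            simp
          exact place_rel this
        · exact (stackSetoid p (permPartition σ)).iseqv.refl _
        · exact (stackSetoid p (permPartition σ)).iseqv.refl _
      have hmid : (stackSetoid p (permPartition σ)).r (downMap k (ψ z)) (downMap k (ψ w)) := by
        rw [stack_eq]
        refine le_sup_right (α := Setoid _) (b := place (downMap k) p) (place_rel h)
      exact (stackSetoid p (permPartition σ)).iseqv.trans (anchor z)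
        ((stackSetoid p (permPartition σ)).iseqv.trans hmid
          ((stackSetoid p (permPartition σ)).iseqv.symm (anchor w)))
  rw [comp_eq, hstack, comap_comap]
  congr 1
  funext x
  rcases x with i | i <;> rfl

end Diagrams

section Counting
variable {k l : ℕ}

lemma nc_def (p : Setoid α) : nc p = Nat.card (Quotient p) := rfl

lemma mid_iff (z : Fin k ⊕ (Fin k ⊕ Fin k)) :
    (∃ i : Fin k, z = Sum.inr (Sum.inl i)) ↔ z ∉ Set.range (outMap k) := by
  constructor
  · rintro ⟨i, rfl⟩ ⟨u, hu⟩
    rcases u with a | a <;> simp [outMap] at hu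
  · intro h
    rcases z with a | (i | a)
    · exact absurd ⟨Sum.inl a, rfl⟩ h
    · exact ⟨i, rfl⟩
    · exact absurd ⟨Sum.inr a, rfl⟩ h

lemma kappa_eq (p q : Pk k) :
    kappaP p q = Nat.card {c : Quotient (stackSetoid p q) //
      ∀ z, Quotient.mk (stackSetoid p q) z = c → z ∉ Set.range (outMap k)} := by
  unfold kappaP
  apply Nat.card_congr
  apply Equiv.subtypeEquivRight
  intro c
  constructor
  · intro h z hz
    exact (mid_iff z).1 (h z hz)
  · intro h z hz
    exact (mid_iff z).2 (h z hz)

lemma stack_nc (p q x : Pk k) :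
    nc (stackSetoid p q ⊔ place (outMap k) x) = nc (comp p q ⊔ x) + kappaP p q := by
  rw [nc_def, nc_split (outMap k) (stackSetoid p q ⊔ place (outMap k) x),
    comap_sup_place _ (fun a b h => by
      rcases a with a | a <;> rcases b with b | b <;> simp [outMap] at h <;> simp [h]),
    nc_avoid_sup, ← comp_eq, kappa_eq, nc_def]

lemma stack_nc_bot (p q : Pk k) : nc (stackSetoid p q) = nc (comp p q) + kappaP p q := by
  have := stack_nc p q ⊥
  rwa [place_bot, sup_bot_eq, sup_bot_eq] at this

lemma nc_idk : nc (idk k) = k := by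
  rw [nc_def, idk,
    Nat.card_congr (Setoid.quotientKerEquivOfSurjective _ (fun i => ⟨Sum.inl i, rfl⟩))]
  simp

lemma sum_rel_ll {p : Setoid α} {q : Setoid β} {a b : α} :
    (sumSetoid p q).r (Sum.inl a) (Sum.inl b) ↔ p.r a b := by
  constructor
  · intro h
    have h' : (Sum.inl (Quotient.mk p a) : Quotient p ⊕ Quotient q) = Sum.inl (Quotient.mk p b) := h
    exact Quotient.exact (Sum.inl.inj h')
  · intro h
    show (Sum.inl (Quotient.mk p a) : Quotient p ⊕ Quotient q) = Sum.inl (Quotient.mk p b)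
    rw [Quotient.sound h]

lemma sum_rel_rr {p : Setoid α} {q : Setoid β} {a b : β} :
    (sumSetoid p q).r (Sum.inr a) (Sum.inr b) ↔ q.r a b := by
  constructor
  · intro h
    have h' : (Sum.inr (Quotient.mk q a) : Quotient p ⊕ Quotient q) = Sum.inr (Quotient.mk q b) := h
    exact Quotient.exact (Sum.inr.inj h')
  · intro h
    show (Sum.inr (Quotient.mk q a) : Quotient p ⊕ Quotient q) = Sum.inr (Quotient.mk q b)
    rw [Quotient.sound h]

lemma sum_rel_lr {p : Setoid α} {q : Setoid β} {a : α} {b : β} :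
    ¬ (sumSetoid p q).r (Sum.inl a) (Sum.inr b) := by
  intro h
  have h' : (Sum.inl (Quotient.mk p a) : Quotient p ⊕ Quotient q) = Sum.inr (Quotient.mk q b) := h
  simp at h'

lemma sum_rel_rl {p : Setoid α} {q : Setoid β} {a : β} {b : α} :
    ¬ (sumSetoid p q).r (Sum.inr a) (Sum.inl b) := by
  intro h
  have h' : (Sum.inr (Quotient.mk q a) : Quotient p ⊕ Quotient q) = Sum.inl (Quotient.mk p b) := h
  simp at h'

lemma sumSetoid_sup (p p' : Setoid α) (q q' : Setoid β) :
    sumSetoid p q ⊔ sumSetoid p' q' = sumSetoid (p ⊔ p') (q ⊔ q') := by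
  apply le_antisymm
  · apply sup_le
    · intro x y h
      rcases x with a | a <;> rcases y with b | b
      · exact sum_rel_ll.2 (le_sup_left (α := Setoid α) (a := p) (sum_rel_ll.1 h))
      · exact absurd h sum_rel_lr
      · exact absurd h sum_rel_rl
      · exact sum_rel_rr.2 (le_sup_left (α := Setoid β) (a := q) (sum_rel_rr.1 h))
    · intro x y h
      rcases x with a | a <;> rcases y with b | b
      · exact sum_rel_ll.2 (le_sup_right (α := Setoid α) (b := p') (sum_rel_ll.1 h))
      · exact absurd h sum_rel_lr
      · exact absurd h sum_rel_rl
      · exact sum_rel_rr.2 (le_sup_right (α := Setoid β) (b := q') (sum_rel_rr.1 h))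
  · intro x y h
    set T := sumSetoid p q ⊔ sumSetoid p' q' with hT
    rcases x with a | a <;> rcases y with b | b
    · have h' : (p ⊔ p').r a b := sum_rel_ll.1 h
      refine sup_rel_ind h' (P := fun a b => T.r (Sum.inl a) (Sum.inl b)) ?_ ?_ ?_ ?_ ?_
      · intro u; exact T.iseqv.refl _
      · intro u v h; exact T.iseqv.symm h
      · intro u v w h1 h2; exact T.iseqv.trans h1 h2
      · intro u v h
        exact le_sup_left (α := Setoid (α ⊕ β)) (a := sumSetoid p q) (sum_rel_ll.2 h)
      · intro u v h
        exact le_sup_right (α := Setoid (α ⊕ β)) (b := sumSetoid p' q') (sum_rel_ll.2 h)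
    · exact absurd h sum_rel_lr
    · exact absurd h sum_rel_rl
    · have h' : (q ⊔ q').r a b := sum_rel_rr.1 h
      refine sup_rel_ind h' (P := fun a b => T.r (Sum.inr a) (Sum.inr b)) ?_ ?_ ?_ ?_ ?_
      · intro u; exact T.iseqv.refl _
      · intro u v h; exact T.iseqv.symm h
      · intro u v w h1 h2; exact T.iseqv.trans h1 h2
      · intro u v h
        exact le_sup_left (α := Setoid (α ⊕ β)) (a := sumSetoid p q) (sum_rel_rr.2 h)
      · intro u v h
        exact le_sup_right (α := Setoid (α ⊕ β)) (b := sumSetoid p' q') (sum_rel_rr.2 h)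

lemma nc_sumSetoid [Finite α] [Finite β] (p : Setoid α) (q : Setoid β) :
    nc (sumSetoid p q) = nc p + nc q := by
  rw [nc_def, sumSetoid,
    Nat.card_congr (Setoid.quotientKerEquivOfSurjective _
      (Sum.map_surjective.2 ⟨Quotient.mk_surjective, Quotient.mk_surjective⟩)),
    Nat.card_sum]
  rfl

/-- `reindex` as an equivalence. -/
def reindexEquiv (k l : ℕ) :
    (Fin (k + l) ⊕ Fin (k + l)) ≃ ((Fin k ⊕ Fin k) ⊕ (Fin l ⊕ Fin l)) where
  toFun := reindex k l
  invFun := Sum.elim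
    (Sum.elim (fun a => Sum.inl (finSumFinEquiv (Sum.inl a)))
      (fun a => Sum.inr (finSumFinEquiv (Sum.inl a))))
    (Sum.elim (fun b => Sum.inl (finSumFinEquiv (Sum.inr b)))
      (fun b => Sum.inr (finSumFinEquiv (Sum.inr b))))
  left_inv := by
    rintro (j | j) <;>
    · obtain ⟨u, rfl⟩ := finSumFinEquiv.surjective j
      rcases u with a | b <;> simp [reindex]
  right_inv := by
    rintro ((a | a) | (b | b)) <;> simp [reindex]

lemma coe_reindexEquiv : ⇑(reindexEquiv k l) = reindex k l := rfl

lemma tensor_comap (p : Pk k) (q : Pk l) :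
    tensor p q = Setoid.comap (⇑(reindexEquiv k l)) (sumSetoid p q) := rfl

lemma nc_tensor (p : Pk k) (q : Pk l) : nc (tensor p q) = nc p + nc q := by
  rw [tensor_comap, nc_def, nc_congr (reindexEquiv k l), ← nc_def, nc_sumSetoid]

lemma tensor_sup (p p' : Pk k) (q q' : Pk l) :
    tensor p q ⊔ tensor p' q' = tensor (p ⊔ p') (q ⊔ q') := by
  rw [tensor_comap, tensor_comap, tensor_comap, ← comap_equiv_sup, sumSetoid_sup]

lemma reindexE_tl (a : Fin k) :
    reindexEquiv k l (Sum.inl (finSumFinEquiv (Sum.inl a))) = Sum.inl (Sum.inl a) := by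
  simp [reindexEquiv, reindex]

lemma reindexE_tr (b : Fin l) :
    reindexEquiv k l (Sum.inl (finSumFinEquiv (Sum.inr b))) = Sum.inr (Sum.inl b) := by
  simp [reindexEquiv, reindex]

lemma reindexE_bl (a : Fin k) :
    reindexEquiv k l (Sum.inr (finSumFinEquiv (Sum.inl a))) = Sum.inl (Sum.inr a) := by
  simp [reindexEquiv, reindex]

lemma reindexE_br (b : Fin l) :
    reindexEquiv k l (Sum.inr (finSumFinEquiv (Sum.inr b))) = Sum.inr (Sum.inr b) := by
  simp [reindexEquiv, reindex]

lemma idk_rel {n : ℕ} {u v : Fin n ⊕ Fin n} :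
    (idk n).r u v ↔ Sum.elim id id u = Sum.elim id id v := Iff.rfl

lemma idk_tensor : idk (k + l) = tensor (idk k) (idk l) := by
  apply Setoid.ext
  intro x y
  rw [tensor_comap]
  constructor
  · intro h
    have h' : Sum.elim id id x = Sum.elim id id y := h
    show (sumSetoid (idk k) (idk l)).r (reindexEquiv k l x) (reindexEquiv k l y)
    rcases x with j | j <;> rcases y with j' | j' <;>
      obtain ⟨u, rfl⟩ := finSumFinEquiv.surjective j <;>
      simp only [Sum.elim_inl, Sum.elim_inr, id_eq] at h' <;>
      subst h' <;>
      rcases u with a | b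
    · rw [reindexE_tl]
    · rw [reindexE_tr]
    · rw [reindexE_tl, reindexE_bl]; exact sum_rel_ll.2 (idk_rel.2 rfl)
    · rw [reindexE_tr, reindexE_br]; exact sum_rel_rr.2 (idk_rel.2 rfl)
    · rw [reindexE_bl, reindexE_tl]; exact sum_rel_ll.2 (idk_rel.2 rfl)
    · rw [reindexE_br, reindexE_tr]; exact sum_rel_rr.2 (idk_rel.2 rfl)
    · rw [reindexE_bl]
    · rw [reindexE_br]
  · intro h
    have h' : (sumSetoid (idk k) (idk l)).r (reindexEquiv k l x) (reindexEquiv k l y) := h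
    show Sum.elim id id x = Sum.elim id id y
    rcases x with j | j <;> rcases y with j' | j' <;>
      obtain ⟨u, rfl⟩ := finSumFinEquiv.surjective j <;>
      obtain ⟨v, rfl⟩ := finSumFinEquiv.surjective j' <;>
      rcases u with a | b <;> rcases v with a' | b' <;>
      simp only [reindexE_tl, reindexE_tr, reindexE_bl, reindexE_br] at h' <;>
      simp only [Sum.elim_inl, Sum.elim_inr, id_eq]
    · exact congrArg _ (congrArg _ (show a = a' from sum_rel_ll.1 h'))
    · exact absurd h' sum_rel_lr
    · exact absurd h' sum_rel_rl
    · exact congrArg _ (congrArg _ (show b = b' from sum_rel_rr.1 h'))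
    · exact congrArg _ (congrArg _ (show a = a' from sum_rel_ll.1 h'))
    · exact absurd h' sum_rel_lr
    · exact absurd h' sum_rel_rl
    · exact congrArg _ (congrArg _ (show b = b' from sum_rel_rr.1 h'))
    · exact congrArg _ (congrArg _ (show a = a' from sum_rel_ll.1 h'))
    · exact absurd h' sum_rel_lr
    · exact absurd h' sum_rel_rl
    · exact congrArg _ (congrArg _ (show b = b' from sum_rel_rr.1 h'))
    · exact congrArg _ (congrArg _ (show a = a' from sum_rel_ll.1 h'))
    · exact absurd h' sum_rel_lr
    · exact absurd h' sum_rel_rl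
    · exact congrArg _ (congrArg _ (show b = b' from sum_rel_rr.1 h'))

end Counting

section Identities
variable {k : ℕ}

lemma transpose_comap (p : Pk k) :
    transpose p = Setoid.comap (⇑(Equiv.sumComm (Fin k) (Fin k))) p := by
  unfold transpose
  congr 1

/-- Row exchange M ↔ B. -/
def phiMB (k : ℕ) : (Fin k ⊕ (Fin k ⊕ Fin k)) ≃ (Fin k ⊕ (Fin k ⊕ Fin k)) :=
  Equiv.sumCongr (Equiv.refl _) (Equiv.sumComm _ _)

/-- Row exchange T ↔ M. -/
def phiTM (k : ℕ) : (Fin k ⊕ (Fin k ⊕ Fin k)) ≃ (Fin k ⊕ (Fin k ⊕ Fin k)) where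
  toFun := Sum.elim (fun a => Sum.inr (Sum.inl a))
    (Sum.elim Sum.inl (fun a => Sum.inr (Sum.inr a)))
  invFun := Sum.elim (fun a => Sum.inr (Sum.inl a))
    (Sum.elim Sum.inl (fun a => Sum.inr (Sum.inr a)))
  left_inv := by rintro (a | (a | a)) <;> rfl
  right_inv := by rintro (a | (a | a)) <;> rfl

lemma F8 (p₀ p₁ p₂ : Pk k) :
    nc (stackSetoid (transpose p₁) p₀ ⊔ place (outMap k) p₂) =
      nc (stackSetoid p₁ p₂ ⊔ place (outMap k) p₀) := by
  have key : Setoid.comap (⇑(phiMB k)) (stackSetoid (transpose p₁) p₀ ⊔ place (outMap k) p₂) =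
      stackSetoid p₁ p₂ ⊔ place (outMap k) p₀ := by
    rw [stack_eq, stack_eq, comap_equiv_sup, comap_equiv_sup]
    have e1 : Setoid.comap (⇑(phiMB k)) (place (upMap k) p₀) = place (outMap k) p₀ := by
      rw [comap_place_equiv]
      congr 1
      funext u
      rcases u with a | a <;> rfl
    have e2 : Setoid.comap (⇑(phiMB k)) (place (downMap k) (transpose p₁)) =
        place (downMap k) p₁ := by
      rw [transpose_comap, place_comap_equiv, comap_place_equiv]
      congr 1
      funext u
      rcases u with a | a <;> rfl
    have e3 : Setoid.comap (⇑(phiMB k)) (place (outMap k) p₂) = place (upMap k) p₂ := by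
      rw [comap_place_equiv]
      congr 1
      funext u
      rcases u with a | a <;> rfl
    rw [e1, e2, e3]
    rw [sup_comm (place (outMap k) p₀) (place (downMap k) p₁), sup_assoc,
      sup_comm (place (outMap k) p₀) (place (upMap k) p₂), ← sup_assoc]
    rw [sup_comm (place (downMap k) p₁) (place (upMap k) p₂)]
  rw [← key]
  exact (nc_congr (phiMB k) _).symm

lemma F11 (p₀ p₁ p₂ : Pk k) :
    nc (stackSetoid p₀ (transpose p₂) ⊔ place (outMap k) p₁) =
      nc (stackSetoid p₁ p₂ ⊔ place (outMap k) p₀) := by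
  have key : Setoid.comap (⇑(phiTM k)) (stackSetoid p₀ (transpose p₂) ⊔ place (outMap k) p₁) =
      stackSetoid p₁ p₂ ⊔ place (outMap k) p₀ := by
    rw [stack_eq, stack_eq, comap_equiv_sup, comap_equiv_sup]
    have e1 : Setoid.comap (⇑(phiTM k)) (place (upMap k) (transpose p₂)) =
        place (upMap k) p₂ := by
      rw [transpose_comap, place_comap_equiv, comap_place_equiv]
      congr 1
      funext u
      rcases u with a | a <;> rfl
    have e2 : Setoid.comap (⇑(phiTM k)) (place (downMap k) p₀) = place (outMap k) p₀ := by
      rw [comap_place_equiv]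
      congr 1
      funext u
      rcases u with a | a <;> rfl
    have e3 : Setoid.comap (⇑(phiTM k)) (place (outMap k) p₁) = place (downMap k) p₁ := by
      rw [comap_place_equiv]
      congr 1
      funext u
      rcases u with a | a <;> rfl
    rw [e1, e2, e3]
    rw [sup_assoc, sup_comm (place (outMap k) p₀) (place (downMap k) p₁), ← sup_assoc]
  rw [← key]
  exact (nc_congr (phiTM k) _).symm

lemma transpose_rel {p : Pk k} {u v : Fin k ⊕ Fin k} :
    (transpose p).r u v ↔ p.r (Sum.swap u) (Sum.swap v) := Iff.rfl

lemma F9 (p₀ p₁ : Pk k) :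
    nc (stackSetoid (transpose p₁) p₀ ⊔ place (outMap k) (idk k)) = nc (p₁ ⊔ p₀) := by
  set s := stackSetoid (transpose p₁) p₀ ⊔ place (outMap k) (idk k) with hs
  set g : (Fin k ⊕ (Fin k ⊕ Fin k)) → (Fin k ⊕ Fin k) :=
    Sum.elim Sum.inl (Sum.elim Sum.inr Sum.inl) with hg
  have hgsurj : Function.Surjective g := by
    rintro (a | a)
    · exact ⟨Sum.inl a, rfl⟩
    · exact ⟨Sum.inr (Sum.inl a), rfl⟩
  refine glue_nc hgsurj (sup_eq_gen p₁ p₀) ?_ ?_ ?_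
  · rintro (a | (a | a)) (b | (b | b)) h
    · have hab : a = b := by simpa [hg] using h
      subst hab; exact s.iseqv.refl _
    · exfalso; simp [hg] at h
    · have hab : a = b := by simpa [hg] using h
      subst hab
      exact le_sup_right (α := Setoid _) (b := place (outMap k) (idk k))
        (place_rel (show (idk k).r (Sum.inl a) (Sum.inr a) from rfl))
    · exfalso; simp [hg] at h
    · have hab : a = b := by simpa [hg] using h
      subst hab; exact s.iseqv.refl _
    · exfalso; simp [hg] at h
    · have hab : a = b := by simpa [hg] using h
      subst hab
      exact s.iseqv.symm (le_sup_right (α := Setoid _) (b := place (outMap k) (idk k))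
        (place_rel (show (idk k).r (Sum.inl a) (Sum.inr a) from rfl)))
    · exfalso; simp [hg] at h
    · have hab : a = b := by simpa [hg] using h
      subst hab; exact s.iseqv.refl _
  · -- s-related points have related images
    intro z w h
    have : s ≤ Setoid.comap g (p₁ ⊔ p₀) := by
      apply sup_le
      · rw [stack_eq]
        apply sup_le
        · apply gen_le
          rintro x y ⟨u, v, rfl, rfl, huv⟩
          show (p₁ ⊔ p₀).r (g (upMap k u)) (g (upMap k v))
          rcases u with a | a <;> rcases v with b | b <;>
            exact le_sup_right (α := Setoid _) (b := p₀) huv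
        · apply gen_le
          rintro x y ⟨u, v, rfl, rfl, huv⟩
          show (p₁ ⊔ p₀).r (g (downMap k u)) (g (downMap k v))
          rcases u with a | a <;> rcases v with b | b <;>
            exact le_sup_left (α := Setoid _) (a := p₁) (transpose_rel.1 huv)
      · apply gen_le
        rintro x y ⟨u, v, rfl, rfl, huv⟩
        show (p₁ ⊔ p₀).r (g (outMap k u)) (g (outMap k v))
        have h' : Sum.elim id id u = Sum.elim id id v := huv
        rcases u with a | a <;> rcases v with b | b <;>
          simp only [Sum.elim_inl, Sum.elim_inr, id_eq] at h' <;> subst h' <;>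
          exact (p₁ ⊔ p₀).iseqv.refl _
    exact this h
  · -- generators lift
    rintro y y' (h | h)
    · refine ⟨downMap k (Sum.swap y), downMap k (Sum.swap y'), ?_, ?_, ?_⟩
      · rcases y with a | a <;> rfl
      · rcases y' with a | a <;> rfl
      · have h' : (transpose p₁).r (Sum.swap y) (Sum.swap y') := by
          rw [transpose_rel, Sum.swap_swap, Sum.swap_swap]
          exact h
        exact le_sup_left (α := Setoid _) (a := stackSetoid (transpose p₁) p₀)
          (by rw [stack_eq]
              exact le_sup_right (α := Setoid _) (b := place (downMap k) (transpose p₁))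
                (place_rel h'))
    · refine ⟨upMap k y, upMap k y', ?_, ?_, ?_⟩
      · rcases y with a | a <;> rfl
      · rcases y' with a | a <;> rfl
      · exact le_sup_left (α := Setoid _) (a := stackSetoid (transpose p₁) p₀)
          (by rw [stack_eq]
              exact le_sup_left (α := Setoid _) (a := place (upMap k) p₀) (place_rel h))

lemma F12 (p₀ p₂ : Pk k) :
    nc (stackSetoid p₀ (transpose p₂) ⊔ place (outMap k) (idk k)) = nc (p₂ ⊔ p₀) := by
  set s := stackSetoid p₀ (transpose p₂) ⊔ place (outMap k) (idk k) with hs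
  set g : (Fin k ⊕ (Fin k ⊕ Fin k)) → (Fin k ⊕ Fin k) :=
    Sum.elim Sum.inr (Sum.elim Sum.inl Sum.inr) with hg
  have hgsurj : Function.Surjective g := by
    rintro (a | a)
    · exact ⟨Sum.inr (Sum.inl a), rfl⟩
    · exact ⟨Sum.inl a, rfl⟩
  refine glue_nc hgsurj (sup_eq_gen p₂ p₀) ?_ ?_ ?_
  · rintro (a | (a | a)) (b | (b | b)) h
    · have hab : a = b := by simpa [hg] using h
      subst hab; exact s.iseqv.refl _
    · exfalso; simp [hg] at h
    · have hab : a = b := by simpa [hg] using h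
      subst hab
      exact le_sup_right (α := Setoid _) (b := place (outMap k) (idk k))
        (place_rel (show (idk k).r (Sum.inl a) (Sum.inr a) from rfl))
    · exfalso; simp [hg] at h
    · have hab : a = b := by simpa [hg] using h
      subst hab; exact s.iseqv.refl _
    · exfalso; simp [hg] at h
    · have hab : a = b := by simpa [hg] using h
      subst hab
      exact s.iseqv.symm (le_sup_right (α := Setoid _) (b := place (outMap k) (idk k))
        (place_rel (show (idk k).r (Sum.inl a) (Sum.inr a) from rfl)))
    · exfalso; simp [hg] at h
    · have hab : a = b := by simpa [hg] using h
      subst hab; exact s.iseqv.refl _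
  · intro z w h
    have : s ≤ Setoid.comap g (p₂ ⊔ p₀) := by
      apply sup_le
      · rw [stack_eq]
        apply sup_le
        · apply gen_le
          rintro x y ⟨u, v, rfl, rfl, huv⟩
          show (p₂ ⊔ p₀).r (g (upMap k u)) (g (upMap k v))
          rcases u with a | a <;> rcases v with b | b <;>
            exact le_sup_left (α := Setoid _) (a := p₂) (transpose_rel.1 huv)
        · apply gen_le
          rintro x y ⟨u, v, rfl, rfl, huv⟩
          show (p₂ ⊔ p₀).r (g (downMap k u)) (g (downMap k v))
          rcases u with a | a <;> rcases v with b | b <;>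
            exact le_sup_right (α := Setoid _) (b := p₀) huv
      · apply gen_le
        rintro x y ⟨u, v, rfl, rfl, huv⟩
        show (p₂ ⊔ p₀).r (g (outMap k u)) (g (outMap k v))
        have h' : Sum.elim id id u = Sum.elim id id v := huv
        rcases u with a | a <;> rcases v with b | b <;>
          simp only [Sum.elim_inl, Sum.elim_inr, id_eq] at h' <;> subst h' <;>
          exact (p₂ ⊔ p₀).iseqv.refl _
    exact this h
  · rintro y y' (h | h)
    · refine ⟨upMap k (Sum.swap y), upMap k (Sum.swap y'), ?_, ?_, ?_⟩
      · rcases y with a | a <;> rfl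
      · rcases y' with a | a <;> rfl
      · have h' : (transpose p₂).r (Sum.swap y) (Sum.swap y') := by
          rw [transpose_rel, Sum.swap_swap, Sum.swap_swap]
          exact h
        exact le_sup_left (α := Setoid _) (a := stackSetoid p₀ (transpose p₂))
          (by rw [stack_eq]
              exact le_sup_left (α := Setoid _) (a := place (upMap k) (transpose p₂))
                (place_rel h'))
    · refine ⟨downMap k y, downMap k y', ?_, ?_, ?_⟩
      · rcases y with a | a <;> rfl
      · rcases y' with a | a <;> rfl
      · exact le_sup_left (α := Setoid _) (a := stackSetoid p₀ (transpose p₂))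
          (by rw [stack_eq]
              exact le_sup_right (α := Setoid _) (b := place (downMap k) p₀) (place_rel h))

lemma F2 (p₁ p₂ : Pk k) :
    nc (idk (k + k) ⊔ tensor p₁ p₂) = nc (idk k ⊔ p₁) + nc (idk k ⊔ p₂) := by
  rw [idk_tensor, tensor_sup, nc_tensor]

lemma tau_apply (u : Fin k ⊕ Fin k) :
    tauPerm k (finSumFinEquiv u) = finSumFinEquiv (Sum.swap u) := by
  simp [tauPerm]

abbrev Gmap (k : ℕ) : (Fin (k + k) ⊕ Fin (k + k)) → ((Fin k ⊕ Fin k) ⊕ (Fin k ⊕ Fin k)) :=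
  fun z => reindexEquiv k k (Sum.map (⇑(tauPerm k)) id z)

lemma G_T1 (a : Fin k) : Gmap k (Sum.inl (finSumFinEquiv (Sum.inl a))) = Sum.inr (Sum.inl a) := by
  show reindexEquiv k k (Sum.inl (tauPerm k (finSumFinEquiv (Sum.inl a)))) = _
  rw [tau_apply]
  exact reindexE_tr a

lemma G_T2 (b : Fin k) : Gmap k (Sum.inl (finSumFinEquiv (Sum.inr b))) = Sum.inl (Sum.inl b) := by
  show reindexEquiv k k (Sum.inl (tauPerm k (finSumFinEquiv (Sum.inr b)))) = _
  rw [tau_apply]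
  exact reindexE_tl b

lemma G_B1 (a : Fin k) : Gmap k (Sum.inr (finSumFinEquiv (Sum.inl a))) = Sum.inl (Sum.inr a) :=
  reindexE_bl a

lemma G_B2 (b : Fin k) : Gmap k (Sum.inr (finSumFinEquiv (Sum.inr b))) = Sum.inr (Sum.inr b) :=
  reindexE_br b

lemma R_comap (p₀ : Pk k) :
    comp (tensor p₀ (idk k)) (permPartition (tauPerm k)) =
      Setoid.comap (Gmap k) (sumSetoid p₀ (idk k)) := by
  rw [comp_perm]
  rfl

/-- The gluing map for condition (4). -/
abbrev g3 (k : ℕ) : (Fin (k + k) ⊕ Fin (k + k)) → (Fin k ⊕ (Fin k ⊕ Fin k)) :=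
  Sum.elim
    (fun j => Sum.elim (fun a => Sum.inr (Sum.inl a)) (fun b => Sum.inl b)
      (finSumFinEquiv.symm j))
    (fun j => Sum.elim (fun a => Sum.inr (Sum.inr a)) (fun b => Sum.inr (Sum.inl b))
      (finSumFinEquiv.symm j))

lemma g3_T1 (a : Fin k) : g3 k (Sum.inl (finSumFinEquiv (Sum.inl a))) = Sum.inr (Sum.inl a) := by
  simp only [g3, Sum.elim_inl, Sum.elim_inr, Equiv.symm_apply_apply]
lemma g3_T2 (b : Fin k) : g3 k (Sum.inl (finSumFinEquiv (Sum.inr b))) = Sum.inl b := by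
  simp only [g3, Sum.elim_inl, Sum.elim_inr, Equiv.symm_apply_apply]
lemma g3_B1 (a : Fin k) : g3 k (Sum.inr (finSumFinEquiv (Sum.inl a))) = Sum.inr (Sum.inr a) := by
  simp only [g3, Sum.elim_inl, Sum.elim_inr, Equiv.symm_apply_apply]
lemma g3_B2 (b : Fin k) : g3 k (Sum.inr (finSumFinEquiv (Sum.inr b))) = Sum.inr (Sum.inl b) := by
  simp only [g3, Sum.elim_inl, Sum.elim_inr, Equiv.symm_apply_apply]

lemma F3 (p₀ p₁ p₂ : Pk k) :
    nc (tensor p₁ p₂ ⊔ comp (tensor p₀ (idk k)) (permPartition (tauPerm k))) =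
      nc (stackSetoid p₁ p₂ ⊔ place (outMap k) p₀) := by
  set t := stackSetoid p₁ p₂ ⊔ place (outMap k) p₀ with ht
  set s := tensor p₁ p₂ ⊔ comp (tensor p₀ (idk k)) (permPartition (tauPerm k)) with hsdef
  have htgen : t = gen (fun x y =>
      ((∃ a b, upMap k a = x ∧ upMap k b = y ∧ p₂.r a b) ∨
       (∃ a b, downMap k a = x ∧ downMap k b = y ∧ p₁.r a b)) ∨
      (∃ a b, outMap k a = x ∧ outMap k b = y ∧ p₀.r a b)) := by
    rw [ht, stack_eq]
    unfold place
    rw [gen_sup_gen, gen_sup_gen]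
  have hup : ∀ {u v}, p₂.r u v → t.r (upMap k u) (upMap k v) := by
    intro u v h
    rw [ht, stack_eq]
    exact le_sup_left (α := Setoid _) (a := place (upMap k) p₂ ⊔ place (downMap k) p₁)
      (le_sup_left (α := Setoid _) (a := place (upMap k) p₂) (place_rel h))
  have hdown : ∀ {u v}, p₁.r u v → t.r (downMap k u) (downMap k v) := by
    intro u v h
    rw [ht, stack_eq]
    exact le_sup_left (α := Setoid _) (a := place (upMap k) p₂ ⊔ place (downMap k) p₁)
      (le_sup_right (α := Setoid _) (b := place (downMap k) p₁) (place_rel h))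
  have hout : ∀ {u v}, p₀.r u v → t.r (outMap k u) (outMap k v) := by
    intro u v h
    rw [ht]
    exact le_sup_right (α := Setoid _) (b := place (outMap k) p₀) (place_rel h)
  have hT12 : ∀ {z w}, (tensor p₁ p₂).r z w ↔
      (sumSetoid p₁ p₂).r (reindexEquiv k k z) (reindexEquiv k k w) := Iff.rfl
  have hR : ∀ {z w}, (comp (tensor p₀ (idk k)) (permPartition (tauPerm k))).r z w ↔
      (sumSetoid p₀ (idk k)).r (Gmap k z) (Gmap k w) := by
    intro z w
    rw [R_comap]
    exact Iff.rfl
  have hg3surj : Function.Surjective (g3 k) := by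
    rintro (b | (a | a))
    · exact ⟨Sum.inl (finSumFinEquiv (Sum.inr b)), g3_T2 b⟩
    · exact ⟨Sum.inl (finSumFinEquiv (Sum.inl a)), g3_T1 a⟩
    · exact ⟨Sum.inr (finSumFinEquiv (Sum.inl a)), g3_B1 a⟩
  refine glue_nc hg3surj htgen ?_ ?_ ?_
  · -- fibers
    rintro (j | j) (j' | j') h <;>
      obtain ⟨u, rfl⟩ := finSumFinEquiv.surjective j <;>
      obtain ⟨v, rfl⟩ := finSumFinEquiv.surjective j' <;>
      rcases u with a | b <;> rcases v with a' | b' <;>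
      simp only [g3_T1, g3_T2, g3_B1, g3_B2] at h
    · have : a = a' := by simpa using h
      subst this; exact s.iseqv.refl _
    · exfalso; simpa using h
    · exfalso; simpa using h
    · have : b = b' := by simpa using h
      subst this; exact s.iseqv.refl _
    · exfalso; simpa using h
    · have : a = b' := by simpa using h
      subst this
      refine le_sup_right (α := Setoid _)
        (b := comp (tensor p₀ (idk k)) (permPartition (tauPerm k))) (hR.2 ?_)
      rw [G_T1, G_B2]
      exact sum_rel_rr.2 (idk_rel.2 rfl)
    · exfalso; simpa using h
    · exfalso; simpa using h
    · exfalso; simpa using h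
    · exfalso; simpa using h
    · have : b = a' := by simpa using h
      subst this
      refine s.iseqv.symm (le_sup_right (α := Setoid _)
        (b := comp (tensor p₀ (idk k)) (permPartition (tauPerm k))) (hR.2 ?_))
      rw [G_T1, G_B2]
      exact sum_rel_rr.2 (idk_rel.2 rfl)
    · exfalso; simpa using h
    · have : a = a' := by simpa using h
      subst this; exact s.iseqv.refl _
    · exfalso; simpa using h
    · exfalso; simpa using h
    · have : b = b' := by simpa using h
      subst this; exact s.iseqv.refl _
  · -- images of s-related points are t-related
    intro z w h
    have hle : s ≤ Setoid.comap (g3 k) t := by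
      apply sup_le
      · intro z w h
        show t.r (g3 k z) (g3 k w)
        have h' := hT12.1 h
        revert h'
        rcases z with j | j <;> rcases w with j' | j' <;>
          obtain ⟨u, rfl⟩ := finSumFinEquiv.surjective j <;>
          obtain ⟨v, rfl⟩ := finSumFinEquiv.surjective j' <;>
          rcases u with a | b <;> rcases v with a' | b' <;>
          intro h' <;>
          simp only [reindexE_tl, reindexE_tr, reindexE_bl, reindexE_br] at h' <;>
          simp only [g3_T1, g3_T2, g3_B1, g3_B2]
        · exact hdown (sum_rel_ll.1 h')
        · exact absurd h' sum_rel_lr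
        · exact absurd h' sum_rel_rl
        · exact hup (sum_rel_rr.1 h')
        · exact hdown (sum_rel_ll.1 h')
        · exact absurd h' sum_rel_lr
        · exact absurd h' sum_rel_rl
        · exact hup (sum_rel_rr.1 h')
        · exact hdown (sum_rel_ll.1 h')
        · exact absurd h' sum_rel_lr
        · exact absurd h' sum_rel_rl
        · exact hup (sum_rel_rr.1 h')
        · exact hdown (sum_rel_ll.1 h')
        · exact absurd h' sum_rel_lr
        · exact absurd h' sum_rel_rl
        · exact hup (sum_rel_rr.1 h')
      · intro z w h
        show t.r (g3 k z) (g3 k w)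
        have h' := hR.1 h
        revert h'
        rcases z with j | j <;> rcases w with j' | j' <;>
          obtain ⟨u, rfl⟩ := finSumFinEquiv.surjective j <;>
          obtain ⟨v, rfl⟩ := finSumFinEquiv.surjective j' <;>
          rcases u with a | b <;> rcases v with a' | b' <;>
          intro h' <;>
          simp only [G_T1, G_T2, G_B1, G_B2] at h' <;>
          simp only [g3_T1, g3_T2, g3_B1, g3_B2]
        · have : a = a' := idk_rel.1 (sum_rel_rr.1 h')
          subst this; exact t.iseqv.refl _
        · exact absurd h' sum_rel_rl
        · exact absurd h' sum_rel_lr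
        · exact hout (sum_rel_ll.1 h')
        · exact absurd h' sum_rel_rl
        · have : a = b' := idk_rel.1 (sum_rel_rr.1 h')
          subst this; exact t.iseqv.refl _
        · exact hout (sum_rel_ll.1 h')
        · exact absurd h' sum_rel_lr
        · exact absurd h' sum_rel_lr
        · exact hout (sum_rel_ll.1 h')
        · have : b = a' := idk_rel.1 (sum_rel_rr.1 h')
          subst this; exact t.iseqv.refl _
        · exact absurd h' sum_rel_rl
        · exact hout (sum_rel_ll.1 h')
        · exact absurd h' sum_rel_lr
        · exact absurd h' sum_rel_rl
        · have : b = b' := idk_rel.1 (sum_rel_rr.1 h')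
          subst this; exact t.iseqv.refl _
    exact hle h
  · -- generators lift
    rintro y y' ((⟨u, v, rfl, rfl, huv⟩ | ⟨u, v, rfl, rfl, huv⟩) | ⟨u, v, rfl, rfl, huv⟩)
    · -- p₂ on top rows : lift to (T₂, B₂)
      refine ⟨Sum.elim (fun b => Sum.inl (finSumFinEquiv (Sum.inr b)))
          (fun b => Sum.inr (finSumFinEquiv (Sum.inr b))) u,
        Sum.elim (fun b => Sum.inl (finSumFinEquiv (Sum.inr b)))
          (fun b => Sum.inr (finSumFinEquiv (Sum.inr b))) v, ?_, ?_, ?_⟩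
      · rcases u with b | b
        · exact g3_T2 b
        · exact g3_B2 b
      · rcases v with b | b
        · exact g3_T2 b
        · exact g3_B2 b
      · refine le_sup_left (α := Setoid _) (a := tensor p₁ p₂) (hT12.2 ?_)
        rcases u with b | b <;> rcases v with b' | b' <;>
          simp only [Sum.elim_inl, Sum.elim_inr, reindexE_tr, reindexE_br] <;>
          exact sum_rel_rr.2 huv
    · -- p₁ on bottom rows : lift to (T₁, B₁)
      refine ⟨Sum.elim (fun a => Sum.inl (finSumFinEquiv (Sum.inl a)))
          (fun a => Sum.inr (finSumFinEquiv (Sum.inl a))) u,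
        Sum.elim (fun a => Sum.inl (finSumFinEquiv (Sum.inl a)))
          (fun a => Sum.inr (finSumFinEquiv (Sum.inl a))) v, ?_, ?_, ?_⟩
      · rcases u with a | a
        · exact g3_T1 a
        · exact g3_B1 a
      · rcases v with a | a
        · exact g3_T1 a
        · exact g3_B1 a
      · refine le_sup_left (α := Setoid _) (a := tensor p₁ p₂) (hT12.2 ?_)
        rcases u with a | a <;> rcases v with a' | a' <;>
          simp only [Sum.elim_inl, Sum.elim_inr, reindexE_tl, reindexE_bl] <;>
          exact sum_rel_ll.2 huv
    · -- p₀ outer : lift to (T₂, B₁)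
      refine ⟨Sum.elim (fun b => Sum.inl (finSumFinEquiv (Sum.inr b)))
          (fun a => Sum.inr (finSumFinEquiv (Sum.inl a))) u,
        Sum.elim (fun b => Sum.inl (finSumFinEquiv (Sum.inr b)))
          (fun a => Sum.inr (finSumFinEquiv (Sum.inl a))) v, ?_, ?_, ?_⟩
      · rcases u with b | a
        · exact g3_T2 b
        · exact g3_B1 a
      · rcases v with b | a
        · exact g3_T2 b
        · exact g3_B1 a
      · refine le_sup_right (α := Setoid _)
          (b := comp (tensor p₀ (idk k)) (permPartition (tauPerm k))) (hR.2 ?_)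
        rcases u with b | a <;> rcases v with b' | a' <;>
          simp only [Sum.elim_inl, Sum.elim_inr, G_T2, G_B1] <;>
          exact sum_rel_ll.2 huv

/-- The gluing map for `J(id₂ₖ, R) = J(id_k, p₀)`. -/
abbrev g4 (k : ℕ) : (Fin (k + k) ⊕ Fin (k + k)) → (Fin k ⊕ Fin k) :=
  fun z => Sum.swap (finSumFinEquiv.symm (Sum.elim id id z))

lemma g4_T1 (a : Fin k) : g4 k (Sum.inl (finSumFinEquiv (Sum.inl a))) = Sum.inr a := by
  simp only [g4, Sum.elim_inl, id_eq, Equiv.symm_apply_apply, Sum.swap_inl]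
lemma g4_T2 (b : Fin k) : g4 k (Sum.inl (finSumFinEquiv (Sum.inr b))) = Sum.inl b := by
  simp only [g4, Sum.elim_inl, id_eq, Equiv.symm_apply_apply, Sum.swap_inr]
lemma g4_B1 (a : Fin k) : g4 k (Sum.inr (finSumFinEquiv (Sum.inl a))) = Sum.inr a := by
  simp only [g4, Sum.elim_inr, id_eq, Equiv.symm_apply_apply, Sum.swap_inl]
lemma g4_B2 (b : Fin k) : g4 k (Sum.inr (finSumFinEquiv (Sum.inr b))) = Sum.inl b := by
  simp only [g4, Sum.elim_inr, id_eq, Equiv.symm_apply_apply, Sum.swap_inr]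

lemma F4 (p₀ : Pk k) :
    nc (idk (k + k) ⊔ comp (tensor p₀ (idk k)) (permPartition (tauPerm k))) =
      nc (idk k ⊔ p₀) := by
  set s := idk (k + k) ⊔ comp (tensor p₀ (idk k)) (permPartition (tauPerm k)) with hsdef
  set t := idk k ⊔ p₀ with ht
  have hR : ∀ {z w}, (comp (tensor p₀ (idk k)) (permPartition (tauPerm k))).r z w ↔
      (sumSetoid p₀ (idk k)).r (Gmap k z) (Gmap k w) := by
    intro z w
    rw [R_comap]
    exact Iff.rfl
  have hRle : comp (tensor p₀ (idk k)) (permPartition (tauPerm k)) ≤ s := le_sup_right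
  have hI2le : idk (k + k) ≤ s := le_sup_left
  have hI2 : ∀ {j j' : Fin (k + k)} (z w : Fin (k + k) ⊕ Fin (k + k)),
      Sum.elim id id z = j → Sum.elim id id w = j → (idk (k + k)).r z w := by
    intro j j' z w hz hw
    show Sum.elim id id z = Sum.elim id id w
    rw [hz, hw]
  have hg4surj : Function.Surjective (g4 k) := by
    rintro (b | a)
    · exact ⟨Sum.inl (finSumFinEquiv (Sum.inr b)), g4_T2 b⟩
    · exact ⟨Sum.inl (finSumFinEquiv (Sum.inl a)), g4_T1 a⟩
  refine glue_nc hg4surj (sup_eq_gen (idk k) p₀) ?_ ?_ ?_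
  · -- fibers: equal g4-image means equal underlying index, i.e. idk-(k+k)-related
    intro z w h
    refine hI2le (show (idk (k + k)).r z w from ?_)
    show Sum.elim id id z = Sum.elim id id w
    have := congrArg (fun u => finSumFinEquiv (Sum.swap u)) h
    simpa using this
  · -- s-related points have t-related images
    intro z w h
    have hle : s ≤ Setoid.comap (g4 k) t := by
      apply sup_le
      · intro z w h
        show t.r (g4 k z) (g4 k w)
        have h' : Sum.elim id id z = Sum.elim id id w := h
        have : g4 k z = g4 k w := by simp only [g4, h']
        rw [this]
      · intro z w h
        show t.r (g4 k z) (g4 k w)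
        have h' := hR.1 h
        revert h'
        rcases z with j | j <;> rcases w with j' | j' <;>
          obtain ⟨u, rfl⟩ := finSumFinEquiv.surjective j <;>
          obtain ⟨v, rfl⟩ := finSumFinEquiv.surjective j' <;>
          rcases u with a | b <;> rcases v with a' | b' <;>
          intro h' <;>
          simp only [G_T1, G_T2, G_B1, G_B2] at h' <;>
          simp only [g4_T1, g4_T2, g4_B1, g4_B2]
        · -- (T1,T1) idk: a = a'
          have : a = a' := idk_rel.1 (sum_rel_rr.1 h')
          subst this; exact t.iseqv.refl _
        · exact absurd h' sum_rel_rl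
        · exact absurd h' sum_rel_lr
        · exact le_sup_right (α := Setoid _) (b := p₀) (sum_rel_ll.1 h')
        · exact absurd h' sum_rel_rl
        · -- (T1,B2) idk : a = b' ; images inr a, inl b'
          have : a = b' := idk_rel.1 (sum_rel_rr.1 h')
          subst this
          exact t.iseqv.symm (le_sup_left (α := Setoid _) (a := idk k)
            (show (idk k).r (Sum.inl a) (Sum.inr a) from rfl))
        · exact le_sup_right (α := Setoid _) (b := p₀) (sum_rel_ll.1 h')
        · exact absurd h' sum_rel_lr
        · exact absurd h' sum_rel_lr
        · exact le_sup_right (α := Setoid _) (b := p₀) (sum_rel_ll.1 h')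
        · -- (B2,T1) idk : b = a' ; images inl b, inr a'
          have : b = a' := idk_rel.1 (sum_rel_rr.1 h')
          subst this
          exact le_sup_left (α := Setoid _) (a := idk k)
            (show (idk k).r (Sum.inl b) (Sum.inr b) from rfl)
        · exact absurd h' sum_rel_rl
        · exact le_sup_right (α := Setoid _) (b := p₀) (sum_rel_ll.1 h')
        · exact absurd h' sum_rel_lr
        · exact absurd h' sum_rel_rl
        · have : b = b' := idk_rel.1 (sum_rel_rr.1 h')
          subst this; exact t.iseqv.refl _
    exact hle h
  · -- generators lift
    rintro y y' (h | h)
    · -- idk generator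
      have h' : Sum.elim id id y = Sum.elim id id y' := h
      rcases y with a | a <;> rcases y' with a' | a' <;>
        simp only [Sum.elim_inl, Sum.elim_inr, id_eq] at h' <;> subst h'
      · exact ⟨Sum.inl (finSumFinEquiv (Sum.inr a)), Sum.inl (finSumFinEquiv (Sum.inr a)),
          g4_T2 a, g4_T2 a, s.iseqv.refl _⟩
      · -- lift inl a to T₂ a and inr a to T₁ a
        refine ⟨Sum.inl (finSumFinEquiv (Sum.inr a)), Sum.inl (finSumFinEquiv (Sum.inl a)),
          g4_T2 a, g4_T1 a, ?_⟩
        have step1 : (idk (k + k)).r (Sum.inl (finSumFinEquiv (Sum.inr a)))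
            (Sum.inr (finSumFinEquiv (Sum.inr a))) := rfl
        have step2 : (comp (tensor p₀ (idk k)) (permPartition (tauPerm k))).r
            (Sum.inr (finSumFinEquiv (Sum.inr a))) (Sum.inl (finSumFinEquiv (Sum.inl a))) := by
          refine hR.2 ?_
          rw [G_B2, G_T1]
          exact sum_rel_rr.2 (idk_rel.2 rfl)
        exact s.iseqv.trans (hI2le step1) (hRle step2)
      · refine ⟨Sum.inl (finSumFinEquiv (Sum.inl a)), Sum.inl (finSumFinEquiv (Sum.inr a)),
          g4_T1 a, g4_T2 a, ?_⟩
        have step1 : (idk (k + k)).r (Sum.inl (finSumFinEquiv (Sum.inr a)))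
            (Sum.inr (finSumFinEquiv (Sum.inr a))) := rfl
        have step2 : (comp (tensor p₀ (idk k)) (permPartition (tauPerm k))).r
            (Sum.inr (finSumFinEquiv (Sum.inr a))) (Sum.inl (finSumFinEquiv (Sum.inl a))) := by
          refine hR.2 ?_
          rw [G_B2, G_T1]
          exact sum_rel_rr.2 (idk_rel.2 rfl)
        exact s.iseqv.symm (s.iseqv.trans (hI2le step1) (hRle step2))
      · exact ⟨Sum.inl (finSumFinEquiv (Sum.inl a)), Sum.inl (finSumFinEquiv (Sum.inl a)),
          g4_T1 a, g4_T1 a, s.iseqv.refl _⟩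
    · -- p₀ generator : lift to (T₂, B₁)
      refine ⟨Sum.elim (fun b => Sum.inl (finSumFinEquiv (Sum.inr b)))
          (fun a => Sum.inr (finSumFinEquiv (Sum.inl a))) y,
        Sum.elim (fun b => Sum.inl (finSumFinEquiv (Sum.inr b)))
          (fun a => Sum.inr (finSumFinEquiv (Sum.inl a))) y', ?_, ?_, ?_⟩
      · rcases y with b | a
        · exact g4_T2 b
        · exact g4_B1 a
      · rcases y' with b | a
        · exact g4_T2 b
        · exact g4_B1 a
      · refine hRle (hR.2 ?_)
        rcases y with b | a <;> rcases y' with b' | a' <;>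
          simp only [Sum.elim_inl, Sum.elim_inr, G_T2, G_B1] <;>
          exact sum_rel_ll.2 h

end Identities

section Assembly
variable {k : ℕ}

lemma geoLE_iff_nat {X : Type*} (b p' p : Setoid X) :
    geoLE b p' p ↔ nc p' + nc (b ⊔ p) = nc (b ⊔ p') + nc (p' ⊔ p) := by
  unfold geoLE pdist
  constructor
  · intro h
    have h' : (nc p' : ℚ) + nc (b ⊔ p) = nc (b ⊔ p') + nc (p' ⊔ p) := by linarith
    exact_mod_cast h'
  · intro h
    have h' : (nc p' : ℚ) + nc (b ⊔ p) = nc (b ⊔ p') + nc (p' ⊔ p) := by exact_mod_cast h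
    linarith

lemma nc_tri {X : Type*} [Finite X] (b p' p : Setoid X) :
    nc (b ⊔ p') + nc (p' ⊔ p) ≤ nc p' + nc (b ⊔ p) :=
  nc_triangle b p' p

lemma eta_eq_zero_iff (p₁ p₂ : Pk k) :
    eta p₁ p₂ = 0 ↔
      nc (stackSetoid p₁ p₂) + nc (idk k ⊔ p₁) + nc (idk k ⊔ p₂) =
        nc p₁ + nc p₂ + nc (idk k ⊔ comp p₁ p₂) := by
  unfold eta pdist
  have hs : (nc (stackSetoid p₁ p₂) : ℚ) = nc (comp p₁ p₂) + kappaP p₁ p₂ := by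
    exact_mod_cast stack_nc_bot p₁ p₂
  rw [nc_idk]
  constructor
  · intro h
    have : (nc (stackSetoid p₁ p₂) : ℚ) + nc (idk k ⊔ p₁) + nc (idk k ⊔ p₂) =
        nc p₁ + nc p₂ + nc (idk k ⊔ comp p₁ p₂) := by linarith
    exact_mod_cast this
  · intro h
    have h' : (nc (stackSetoid p₁ p₂) : ℚ) + nc (idk k ⊔ p₁) + nc (idk k ⊔ p₂) =
        nc p₁ + nc p₂ + nc (idk k ⊔ comp p₁ p₂) := by exact_mod_cast h
    linarith

end Assembly

/-- The following are equivalent: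
(1) `p₁∘p₂ ≤ p₀` and `p₂ ∈ K_{p₁∘p₂}(p₁)`;
(2) `p₁ ≤ p₀` and `p₂ ≤ ᵗp₁∘p₀`;
(3) `p₁ ≤ p₀∘ᵗp₂` and `p₂ ≤ p₀`;
(4) `p₁⊗p₂ ≤ (p₀⊗id_k)∘τ` in `P_{2k}`, where `τ = (1,k+1)(2,k+2)⋯(k,2k)`. -/
theorem statement17 (k : ℕ) (hk : 0 < k) (p₀ p₁ p₂ : Pk k) :
    ((geoLE (idk k) (comp p₁ p₂) p₀ ∧ p₂ ∈ Krew (comp p₁ p₂) p₁) ↔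
      (geoLE (idk k) p₁ p₀ ∧ geoLE (idk k) p₂ (comp (transpose p₁) p₀))) ∧
    ((geoLE (idk k) (comp p₁ p₂) p₀ ∧ p₂ ∈ Krew (comp p₁ p₂) p₁) ↔
      (geoLE (idk k) p₁ (comp p₀ (transpose p₂)) ∧ geoLE (idk k) p₂ p₀)) ∧
    ((geoLE (idk k) (comp p₁ p₂) p₀ ∧ p₂ ∈ Krew (comp p₁ p₂) p₁) ↔
      geoLE (idk (k + k)) (tensor p₁ p₂)
        (comp (tensor p₀ (idk k)) (permPartition (tauPerm k)))) := by
  classical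
  have hmem : p₂ ∈ Krew (comp p₁ p₂) p₁ ↔ eta p₁ p₂ = 0 :=
    ⟨fun h => h.2, fun h => ⟨rfl, h⟩⟩
  simp only [hmem, eta_eq_zero_iff, geoLE_iff_nat]
  -- counting facts
  have hF1 := nc_tensor p₁ p₂
  have hF2 := F2 p₁ p₂
  have hF3 := F3 p₀ p₁ p₂
  have hF4 := F4 (k := k) p₀
  have hF3c := F3 (comp p₁ p₂) p₁ p₂
  have hF4c := F4 (comp p₁ p₂)
  have hA := stack_nc p₁ p₂ p₀
  have hAc := stack_nc p₁ p₂ (comp p₁ p₂)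
  have hcc : nc (comp p₁ p₂ ⊔ comp p₁ p₂) = nc (comp p₁ p₂) := by rw [sup_idem]
  have hS := stack_nc_bot p₁ p₂
  have hB1 := stack_nc (transpose p₁) p₀ p₂
  have hB2 := stack_nc (transpose p₁) p₀ (idk k)
  have hF8 := F8 p₀ p₁ p₂
  have hF9 := F9 p₀ p₁
  have hC1 := stack_nc p₀ (transpose p₂) p₁
  have hC2 := stack_nc p₀ (transpose p₂) (idk k)
  have hF11 := F11 p₀ p₁ p₂
  have hF12 := F12 p₀ p₂
  -- triangle inequalities
  have t1 := nc_tri (idk k) (comp p₁ p₂) p₀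
  have t2 := nc_tri (idk k) p₁ p₀
  have t3 := nc_tri (idk k) p₂ (comp (transpose p₁) p₀)
  have t4 := nc_tri (idk k) p₁ (comp p₀ (transpose p₂))
  have t5 := nc_tri (idk k) p₂ p₀
  have tD := nc_tri (idk (k + k)) (tensor p₁ p₂)
    (comp (tensor p₀ (idk k)) (permPartition (tauPerm k)))
  have tDc := nc_tri (idk (k + k)) (tensor p₁ p₂)
    (comp (tensor (comp p₁ p₂) (idk k)) (permPartition (tauPerm k)))
  -- commutations
  have m1 : nc (comp (transpose p₁) p₀ ⊔ p₂) = nc (p₂ ⊔ comp (transpose p₁) p₀) := by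
    rw [sup_comm]
  have m2 : nc (comp (transpose p₁) p₀ ⊔ idk k) = nc (idk k ⊔ comp (transpose p₁) p₀) := by
    rw [sup_comm]
  have m3 : nc (comp p₀ (transpose p₂) ⊔ p₁) = nc (p₁ ⊔ comp p₀ (transpose p₂)) := by
    rw [sup_comm]
  have m4 : nc (comp p₀ (transpose p₂) ⊔ idk k) = nc (idk k ⊔ comp p₀ (transpose p₂)) := by
    rw [sup_comm]
  refine ⟨?_, ?_, ?_⟩ <;> constructor <;> intro h <;> omega

end PartitionPaper
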